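/- arXiv:2511.14991 — 6 statements merged into one kernel-verified Lean document; each statement's English description precedes it below -/
import Mathlib

section
/- If a convex polyhedron P in ℝ³ with tetrahedral symmetry has at most 6 vertices, then P is a tetrahedron or an octahedron (the convex hull of ±p·e₁, ±p·e₂, ±p·e₃ for some p > 0). -/
open MeasureTheory Pointwise

noncomputable def polarSet {n : ℕ} (s : Set (EuclideanSpace ℝ (Fin n))) :
    Set (EuclideanSpace ℝ (Fin n)) := {x | ∀ y ∈ s, inner ℝ y x ≤ (1:ℝ)}

noncomputable def tetra : Set (EuclideanSpace ℝ (Fin 3)) :=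
  convexHull ℝ {!₂[1,1,-1], !₂[1,-1,1], !₂[-1,1,1], !₂[-1,-1,-1]}

def hasTetraSymm (K : Set (EuclideanSpace ℝ (Fin 3))) : Prop :=
  ∀ g : Matrix.specialOrthogonalGroup (Fin 3) ℝ,
    (fun x : EuclideanSpace ℝ (Fin 3) =>
      (WithLp.toLp 2 ((g : Matrix (Fin 3) (Fin 3) ℝ).mulVec x) : EuclideanSpace ℝ (Fin 3))) '' tetra = tetra →
    (fun x : EuclideanSpace ℝ (Fin 3) =>
      (WithLp.toLp 2 ((g : Matrix (Fin 3) (Fin 3) ℝ).mulVec x) : EuclideanSpace ℝ (Fin 3))) '' K = K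

abbrev E3 := EuclideanSpace ℝ (Fin 3)



lemma vec3_eta (x : E3) : x = (!₂[x 0, x 1, x 2] : E3) := by
  ext j
  fin_cases j <;> rfl

lemma vec3_eq {a b c d e f : ℝ} :
    @Eq E3 !₂[a,b,c] !₂[d,e,f] ↔ a = d ∧ b = e ∧ c = f := by
  constructor
  · intro h
    have h' : (![a,b,c] : Fin 3 → ℝ) = ![d,e,f] := congrArg WithLp.ofLp h
    exact ⟨congrFun h' 0, congrFun h' 1, congrFun h' 2⟩
  · rintro ⟨h1, h2, h3⟩
    rw [h1, h2, h3]

lemma extremePoints_closed (P : Set E3) (f g : E3 → E3)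
    (hf : IsLinearMap ℝ f) (hg : IsLinearMap ℝ g)
    (hgf : ∀ x, g (f x) = x) (hfg : ∀ x, f (g x) = x)
    (hfP : f '' P = P) (hgP : g '' P = P) :
    ∀ x ∈ P.extremePoints ℝ, f x ∈ P.extremePoints ℝ := by
  intro x hx
  rw [mem_extremePoints] at hx ⊢
  obtain ⟨hxP, hseg⟩ := hx
  refine ⟨by rw [← hfP]; exact ⟨x, hxP, rfl⟩, ?_⟩
  intro y hy z hz hmem
  obtain ⟨a, b, ha, hb, hab, habz⟩ := hmem
  have hgy : g y ∈ P := by rw [← hgP]; exact ⟨y, hy, rfl⟩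
  have hgz : g z ∈ P := by rw [← hgP]; exact ⟨z, hz, rfl⟩
  have hx' : x ∈ openSegment ℝ (g y) (g z) := by
    refine ⟨a, b, ha, hb, hab, ?_⟩
    have h2 : g (a • y + b • z) = g (f x) := by rw [habz]
    rw [hgf, hg.map_add, hg.map_smul, hg.map_smul] at h2
    exact h2
  obtain ⟨h1, h2⟩ := hseg (g y) hgy (g z) hgz hx'
  rw [← hfg y, ← hfg z, h1, h2]
  exact ⟨rfl, rfl⟩

lemma mulVec_linear (M : Matrix (Fin 3) (Fin 3) ℝ) :
    IsLinearMap ℝ (fun x : E3 => (WithLp.toLp 2 (M.mulVec x) : E3)) := by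
  constructor
  · intro x y; ext i; simp [Matrix.mulVec_add]
  · intro c x; ext i; simp [Matrix.mulVec_smul]

def Msig : Matrix (Fin 3) (Fin 3) ℝ := !![0,1,0; 0,0,1; 1,0,0]
def Msig2 : Matrix (Fin 3) (Fin 3) ℝ := !![0,0,1; 1,0,0; 0,1,0]
def Md1 : Matrix (Fin 3) (Fin 3) ℝ := !![1,0,0; 0,-1,0; 0,0,-1]
def Md2 : Matrix (Fin 3) (Fin 3) ℝ := !![-1,0,0; 0,1,0; 0,0,-1]
def Md3 : Matrix (Fin 3) (Fin 3) ℝ := !![-1,0,0; 0,-1,0; 0,0,1]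

lemma Msig_mulVec (a b c : ℝ) : (WithLp.toLp 2 (Msig.mulVec ![a,b,c]) : E3) = !₂[b,c,a] := by
  ext j
  fin_cases j <;> simp [Msig, Matrix.mulVec, dotProduct, Fin.sum_univ_three]

lemma Msig2_mulVec (a b c : ℝ) : (WithLp.toLp 2 (Msig2.mulVec ![a,b,c]) : E3) = !₂[c,a,b] := by
  ext j
  fin_cases j <;> simp [Msig2, Matrix.mulVec, dotProduct, Fin.sum_univ_three]

lemma Md1_mulVec (a b c : ℝ) : (WithLp.toLp 2 (Md1.mulVec ![a,b,c]) : E3) = !₂[a,-b,-c] := by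
  ext j
  fin_cases j <;> simp [Md1, Matrix.mulVec, dotProduct, Fin.sum_univ_three]

lemma Md2_mulVec (a b c : ℝ) : (WithLp.toLp 2 (Md2.mulVec ![a,b,c]) : E3) = !₂[-a,b,-c] := by
  ext j
  fin_cases j <;> simp [Md2, Matrix.mulVec, dotProduct, Fin.sum_univ_three]

lemma Md3_mulVec (a b c : ℝ) : (WithLp.toLp 2 (Md3.mulVec ![a,b,c]) : E3) = !₂[-a,-b,c] := by
  ext j
  fin_cases j <;> simp [Md3, Matrix.mulVec, dotProduct, Fin.sum_univ_three]

lemma Msig_mem : Msig ∈ Matrix.specialOrthogonalGroup (Fin 3) ℝ := by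
  rw [Matrix.mem_specialOrthogonalGroup_iff]
  refine ⟨?_, by simp [Msig, Matrix.det_fin_three]⟩
  rw [Matrix.mem_orthogonalGroup_iff]
  ext i j
  fin_cases i <;> fin_cases j <;>
    simp [Msig, Matrix.mul_apply, Fin.sum_univ_three, Matrix.one_apply]

lemma Msig2_mem : Msig2 ∈ Matrix.specialOrthogonalGroup (Fin 3) ℝ := by
  rw [Matrix.mem_specialOrthogonalGroup_iff]
  refine ⟨?_, by simp [Msig2, Matrix.det_fin_three]⟩
  rw [Matrix.mem_orthogonalGroup_iff]
  ext i j
  fin_cases i <;> fin_cases j <;>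
    simp [Msig2, Matrix.mul_apply, Fin.sum_univ_three, Matrix.one_apply]

lemma Md1_mem : Md1 ∈ Matrix.specialOrthogonalGroup (Fin 3) ℝ := by
  rw [Matrix.mem_specialOrthogonalGroup_iff]
  refine ⟨?_, by simp [Md1, Matrix.det_fin_three]⟩
  rw [Matrix.mem_orthogonalGroup_iff]
  ext i j
  fin_cases i <;> fin_cases j <;>
    simp [Md1, Matrix.mul_apply, Fin.sum_univ_three, Matrix.one_apply]

lemma Md2_mem : Md2 ∈ Matrix.specialOrthogonalGroup (Fin 3) ℝ := by
  rw [Matrix.mem_specialOrthogonalGroup_iff]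
  refine ⟨?_, by simp [Md2, Matrix.det_fin_three]⟩
  rw [Matrix.mem_orthogonalGroup_iff]
  ext i j
  fin_cases i <;> fin_cases j <;>
    simp [Md2, Matrix.mul_apply, Fin.sum_univ_three, Matrix.one_apply]

lemma Md3_mem : Md3 ∈ Matrix.specialOrthogonalGroup (Fin 3) ℝ := by
  rw [Matrix.mem_specialOrthogonalGroup_iff]
  refine ⟨?_, by simp [Md3, Matrix.det_fin_three]⟩
  rw [Matrix.mem_orthogonalGroup_iff]
  ext i j
  fin_cases i <;> fin_cases j <;>
    simp [Md3, Matrix.mul_apply, Fin.sum_univ_three, Matrix.one_apply]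

lemma tetra_inv_of (M : Matrix (Fin 3) (Fin 3) ℝ)
    (h : ({(WithLp.toLp 2 (M.mulVec ![1,1,-1]) : E3), (WithLp.toLp 2 (M.mulVec ![1,-1,1]) : E3),
           (WithLp.toLp 2 (M.mulVec ![-1,1,1]) : E3), (WithLp.toLp 2 (M.mulVec ![-1,-1,-1]) : E3)} : Set E3)
        = {!₂[1,1,-1], !₂[1,-1,1], !₂[-1,1,1], !₂[-1,-1,-1]}) :
    (fun x : E3 => (WithLp.toLp 2 (M.mulVec x) : E3)) '' tetra = tetra := by
  rw [tetra, (mulVec_linear M).image_convexHull]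
  congr 1
  rw [Set.image_insert_eq, Set.image_insert_eq, Set.image_insert_eq, Set.image_singleton]
  exact h

lemma Msig_tetra : (fun x : E3 => (WithLp.toLp 2 (Msig.mulVec x) : E3)) '' tetra = tetra := by
  apply tetra_inv_of
  rw [Msig_mulVec, Msig_mulVec, Msig_mulVec, Msig_mulVec]
  norm_num
  ext y
  simp only [Set.mem_insert_iff, Set.mem_singleton_iff]
  tauto

lemma Msig2_tetra : (fun x : E3 => (WithLp.toLp 2 (Msig2.mulVec x) : E3)) '' tetra = tetra := by
  apply tetra_inv_of
  rw [Msig2_mulVec, Msig2_mulVec, Msig2_mulVec, Msig2_mulVec]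
  norm_num
  ext y
  simp only [Set.mem_insert_iff, Set.mem_singleton_iff]
  tauto

lemma Md1_tetra : (fun x : E3 => (WithLp.toLp 2 (Md1.mulVec x) : E3)) '' tetra = tetra := by
  apply tetra_inv_of
  rw [Md1_mulVec, Md1_mulVec, Md1_mulVec, Md1_mulVec]
  norm_num
  ext y
  simp only [Set.mem_insert_iff, Set.mem_singleton_iff]
  tauto

lemma Md2_tetra : (fun x : E3 => (WithLp.toLp 2 (Md2.mulVec x) : E3)) '' tetra = tetra := by
  apply tetra_inv_of
  rw [Md2_mulVec, Md2_mulVec, Md2_mulVec, Md2_mulVec]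
  norm_num
  ext y
  simp only [Set.mem_insert_iff, Set.mem_singleton_iff]
  tauto

lemma Md3_tetra : (fun x : E3 => (WithLp.toLp 2 (Md3.mulVec x) : E3)) '' tetra = tetra := by
  apply tetra_inv_of
  rw [Md3_mulVec, Md3_mulVec, Md3_mulVec, Md3_mulVec]
  norm_num
  ext y
  simp only [Set.mem_insert_iff, Set.mem_singleton_iff]
  tauto

lemma sig_inv1 : ∀ x : E3, (WithLp.toLp 2 (Msig2.mulVec (WithLp.toLp 2 (Msig.mulVec x) : E3)) : E3) = x := by
  intro x
  conv_lhs => rw [vec3_eta x, Msig_mulVec, Msig2_mulVec]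
  conv_rhs => rw [vec3_eta x]
  all_goals rw [vec3_eq]; norm_num

lemma sig_inv2 : ∀ x : E3, (WithLp.toLp 2 (Msig.mulVec (WithLp.toLp 2 (Msig2.mulVec x) : E3)) : E3) = x := by
  intro x
  conv_lhs => rw [vec3_eta x, Msig2_mulVec, Msig_mulVec]
  conv_rhs => rw [vec3_eta x]
  all_goals rw [vec3_eq]; norm_num

lemma d1_inv : ∀ x : E3, (WithLp.toLp 2 (Md1.mulVec (WithLp.toLp 2 (Md1.mulVec x) : E3)) : E3) = x := by
  intro x
  conv_lhs => rw [vec3_eta x, Md1_mulVec, Md1_mulVec]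
  conv_rhs => rw [vec3_eta x]
  all_goals rw [vec3_eq]; norm_num

lemma d2_inv : ∀ x : E3, (WithLp.toLp 2 (Md2.mulVec (WithLp.toLp 2 (Md2.mulVec x) : E3)) : E3) = x := by
  intro x
  conv_lhs => rw [vec3_eta x, Md2_mulVec, Md2_mulVec]
  conv_rhs => rw [vec3_eta x]
  all_goals rw [vec3_eq]; norm_num

lemma d3_inv : ∀ x : E3, (WithLp.toLp 2 (Md3.mulVec (WithLp.toLp 2 (Md3.mulVec x) : E3)) : E3) = x := by
  intro x
  conv_lhs => rw [vec3_eta x, Md3_mulVec, Md3_mulVec]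
  conv_rhs => rw [vec3_eta x]
  all_goals rw [vec3_eq]; norm_num


def quad (u v w : ℝ) : Fin 4 → E3 := ![!₂[u,v,w], !₂[u,-v,-w], !₂[-u,v,-w], !₂[-u,-v,w]]

@[simp] lemma quad0 (u v w : ℝ) : quad u v w 0 = !₂[u,v,w] := rfl
@[simp] lemma quad1 (u v w : ℝ) : quad u v w 1 = !₂[u,-v,-w] := rfl
@[simp] lemma quad2 (u v w : ℝ) : quad u v w 2 = !₂[-u,v,-w] := rfl
@[simp] lemma quad3 (u v w : ℝ) : quad u v w 3 = !₂[-u,-v,w] := rfl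

lemma quad_fst (u v w : ℝ) (i : Fin 4) : quad u v w i 0 = u ∨ quad u v w i 0 = -u := by
  fin_cases i <;> simp

lemma quad_inj {u v w : ℝ} (h1 : v ≠ 0 ∨ w ≠ 0) (h2 : u ≠ 0 ∨ w ≠ 0) (h3 : u ≠ 0 ∨ v ≠ 0) :
    Function.Injective (quad u v w) := by
  intro i j h
  fin_cases i <;> fin_cases j <;>
    simp_all [vec3_eq, CharZero.eq_neg_self_iff, CharZero.neg_eq_self_iff]

section Core

variable {E : Set E3} {V : Finset E3}
variable (hEV : ∀ y ∈ E, y ∈ V) (hcard : V.card ≤ 6)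
variable (hd1 : ∀ a b c : ℝ, (!₂[a,b,c] : E3) ∈ E → (!₂[a,-b,-c] : E3) ∈ E)
variable (hd2 : ∀ a b c : ℝ, (!₂[a,b,c] : E3) ∈ E → (!₂[-a,b,-c] : E3) ∈ E)
variable (hd3 : ∀ a b c : ℝ, (!₂[a,b,c] : E3) ∈ E → (!₂[-a,-b,c] : E3) ∈ E)
variable (hσ : ∀ a b c : ℝ, (!₂[a,b,c] : E3) ∈ E → (!₂[b,c,a] : E3) ∈ E)

include hd1 hd2 hd3 in
lemma quad_mem {u v w : ℝ} (h : (!₂[u,v,w] : E3) ∈ E) : ∀ i, quad u v w i ∈ E := by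
  intro i
  fin_cases i
  · exact h
  · exact hd1 _ _ _ h
  · exact hd2 _ _ _ h
  · exact hd3 _ _ _ h

include hEV hcard in
lemma eight {u v w u' v' w' : ℝ}
    (hm1 : ∀ i, quad u v w i ∈ E) (hm2 : ∀ i, quad u' v' w' i ∈ E)
    (habs : |u| ≠ |u'|)
    (h1 : v ≠ 0 ∨ w ≠ 0) (h2 : u ≠ 0 ∨ w ≠ 0) (h3 : u ≠ 0 ∨ v ≠ 0)
    (h1' : v' ≠ 0 ∨ w' ≠ 0) (h2' : u' ≠ 0 ∨ w' ≠ 0) (h3' : u' ≠ 0 ∨ v' ≠ 0) :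
    False := by
  classical
  set F1 := Finset.image (quad u v w) Finset.univ with hF1
  set F2 := Finset.image (quad u' v' w') Finset.univ with hF2
  have hc1 : F1.card = 4 := by
    rw [hF1, Finset.card_image_of_injective _ (quad_inj h1 h2 h3)]; simp
  have hc2 : F2.card = 4 := by
    rw [hF2, Finset.card_image_of_injective _ (quad_inj h1' h2' h3')]; simp
  have hdisj : Disjoint F1 F2 := by
    rw [Finset.disjoint_left]
    rintro a ha ha'
    rw [hF1, Finset.mem_image] at ha
    rw [hF2, Finset.mem_image] at ha'
    obtain ⟨i, -, rfl⟩ := ha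
    obtain ⟨j, -, hj⟩ := ha'
    have e : quad u' v' w' j 0 = quad u v w i 0 := by rw [hj]
    rcases quad_fst u v w i with h | h <;> rcases quad_fst u' v' w' j with h' | h' <;>
      rw [h, h'] at e <;>
      exact habs (abs_eq_abs.mpr (by first | (left; linarith) | (right; linarith)))
  have hsub : F1 ∪ F2 ⊆ V := by
    intro a ha
    rcases Finset.mem_union.mp ha with ha | ha
    · rw [hF1, Finset.mem_image] at ha
      obtain ⟨i, -, rfl⟩ := ha
      exact hEV _ (hm1 i)
    · rw [hF2, Finset.mem_image] at ha
      obtain ⟨i, -, rfl⟩ := ha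
      exact hEV _ (hm2 i)
  have := Finset.card_le_card hsub
  rw [Finset.card_union_of_disjoint hdisj, hc1, hc2] at this
  omega

include hEV hcard in
lemma eight' {u v w u' v' w' : ℝ}
    (hm1 : ∀ i, quad u v w i ∈ E) (hm2 : ∀ i, quad u' v' w' i ∈ E)
    (hdisj : ∀ i j, quad u v w i ≠ quad u' v' w' j)
    (h1 : v ≠ 0 ∨ w ≠ 0) (h2 : u ≠ 0 ∨ w ≠ 0) (h3 : u ≠ 0 ∨ v ≠ 0)
    (h1' : v' ≠ 0 ∨ w' ≠ 0) (h2' : u' ≠ 0 ∨ w' ≠ 0) (h3' : u' ≠ 0 ∨ v' ≠ 0) :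
    False := by
  classical
  set F1 := Finset.image (quad u v w) Finset.univ with hF1
  set F2 := Finset.image (quad u' v' w') Finset.univ with hF2
  have hc1 : F1.card = 4 := by
    rw [hF1, Finset.card_image_of_injective _ (quad_inj h1 h2 h3)]; simp
  have hc2 : F2.card = 4 := by
    rw [hF2, Finset.card_image_of_injective _ (quad_inj h1' h2' h3')]; simp
  have hdisj' : Disjoint F1 F2 := by
    rw [Finset.disjoint_left]
    rintro a ha ha'
    rw [hF1, Finset.mem_image] at ha
    rw [hF2, Finset.mem_image] at ha'
    obtain ⟨i, -, rfl⟩ := ha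
    obtain ⟨j, -, hj⟩ := ha'
    exact hdisj i j hj.symm
  have hsub : F1 ∪ F2 ⊆ V := by
    intro a ha
    rcases Finset.mem_union.mp ha with ha | ha
    · rw [hF1, Finset.mem_image] at ha
      obtain ⟨i, -, rfl⟩ := ha
      exact hEV _ (hm1 i)
    · rw [hF2, Finset.mem_image] at ha
      obtain ⟨i, -, rfl⟩ := ha
      exact hEV _ (hm2 i)
  have := Finset.card_le_card hsub
  rw [Finset.card_union_of_disjoint hdisj', hc1, hc2] at this
  omega

include hEV hcard hd1 hd2 hd3 in
lemma tetra_absorb {a b c d e f : ℝ} (ha : a ≠ 0)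
    (hb : b = a ∨ b = -a) (hc : c = a ∨ c = -a)
    (hx : (!₂[a,b,c] : E3) ∈ E) (hy : (!₂[d,e,f] : E3) ∈ E)
    (hd : d = a ∨ d = -a) (he : e = a ∨ e = -a) (hf : f = a ∨ f = -a) :
    (!₂[d,e,f] : E3) ∈ Set.range (quad a b c) := by
  have q1 := quad_mem hd1 hd2 hd3 hx
  have q2 := quad_mem hd1 hd2 hd3 hy
  rcases hb with rfl | rfl <;> rcases hc with rfl | rfl <;>
    rcases hd with rfl | rfl <;> rcases he with rfl | rfl <;> rcases hf with rfl | rfl <;>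
    first
      | (refine ⟨0, ?_⟩; simp [vec3_eq]; done)
      | (refine ⟨1, ?_⟩; simp [vec3_eq]; done)
      | (refine ⟨2, ?_⟩; simp [vec3_eq]; done)
      | (refine ⟨3, ?_⟩; simp [vec3_eq]; done)
      | (exfalso; exact eight' hEV hcard q1 q2
          (by intro i j; fin_cases i <;> fin_cases j <;>
            simp [vec3_eq, ha, CharZero.eq_neg_self_iff, CharZero.neg_eq_self_iff])
          (by simp [ha]) (by simp [ha]) (by simp [ha])
          (by simp [ha]) (by simp [ha]) (by simp [ha]))

include hEV hcard hd1 hd2 hd3 hσ in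
lemma no_middle {u v w : ℝ} (hmem : (!₂[u,v,w] : E3) ∈ E)
    (h2 : (u ≠ 0 ∧ v ≠ 0) ∨ (u ≠ 0 ∧ w ≠ 0) ∨ (v ≠ 0 ∧ w ≠ 0))
    (hne : ¬(|u| = |v| ∧ |v| = |w|)) : False := by
  have hs1 : (!₂[v,w,u] : E3) ∈ E := hσ _ _ _ hmem
  have hs2 : (!₂[w,u,v] : E3) ∈ E := hσ _ _ _ hs1
  have q1 := quad_mem hd1 hd2 hd3 hmem
  have q2 := quad_mem hd1 hd2 hd3 hs1
  have q3 := quad_mem hd1 hd2 hd3 hs2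
  by_cases h : |u| = |v|
  · have hvw : |v| ≠ |w| := fun hh => hne ⟨h, hh⟩
    exact eight hEV hcard q2 q3 hvw (by tauto) (by tauto) (by tauto) (by tauto) (by tauto)
      (by tauto)
  · exact eight hEV hcard q1 q2 h (by tauto) (by tauto) (by tauto) (by tauto) (by tauto)
      (by tauto)


include hσ hd3 in
lemma octa_mem {d : ℝ} (h : (!₂[d,0,0] : E3) ∈ E) :
    ((!₂[d,0,0] : E3) ∈ E) ∧ ((!₂[-d,0,0] : E3) ∈ E) ∧ ((!₂[0,d,0] : E3) ∈ E) ∧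
    ((!₂[0,-d,0] : E3) ∈ E) ∧ ((!₂[0,0,d] : E3) ∈ E) ∧ ((!₂[0,0,-d] : E3) ∈ E) := by
  have h1 : (!₂[0,0,d] : E3) ∈ E := by simpa using hσ d 0 0 h
  have h2 : (!₂[0,d,0] : E3) ∈ E := by simpa using hσ 0 0 d h1
  have h3 : (!₂[-d,0,0] : E3) ∈ E := by simpa using hd3 d 0 0 h
  have h4 : (!₂[0,0,-d] : E3) ∈ E := by simpa using hσ (-d) 0 0 h3
  have h5 : (!₂[0,-d,0] : E3) ∈ E := by simpa using hσ 0 0 (-d) h4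
  exact ⟨h, h3, h2, h5, h1, h4⟩

end Core

def osix (d : ℝ) : Fin 6 → E3 :=
  ![!₂[d,0,0], !₂[-d,0,0], !₂[0,d,0], !₂[0,-d,0], !₂[0,0,d], !₂[0,0,-d]]

@[simp] lemma osix0 (d : ℝ) : osix d 0 = !₂[d,0,0] := rfl
@[simp] lemma osix1 (d : ℝ) : osix d 1 = !₂[-d,0,0] := rfl
@[simp] lemma osix2 (d : ℝ) : osix d 2 = !₂[0,d,0] := rfl
@[simp] lemma osix3 (d : ℝ) : osix d 3 = !₂[0,-d,0] := rfl
@[simp] lemma osix4 (d : ℝ) : osix d 4 = !₂[0,0,d] := rfl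
@[simp] lemma osix5 (d : ℝ) : osix d 5 = !₂[0,0,-d] := rfl

lemma osix_inj {d : ℝ} (hd : d ≠ 0) : Function.Injective (osix d) := by
  intro i j h
  fin_cases i <;> fin_cases j <;>
    simp_all [vec3_eq, CharZero.eq_neg_self_iff, CharZero.neg_eq_self_iff]

lemma cnt {n : ℕ} (V : Finset E3) (p : Fin n → E3) (hmem : ∀ i, p i ∈ V)
    (hinj : Function.Injective p) : n ≤ V.card := by
  classical
  simpa using Finset.card_le_card_of_injOn (s := Finset.univ) p (fun i _ => hmem i) hinj.injOn

def sv (a0 a1 a2 a3 a4 a5 a6 : E3) : Fin 7 → E3 := fun i =>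
  match i with
  | 0 => a0 | 1 => a1 | 2 => a2 | 3 => a3 | 4 => a4 | 5 => a5 | 6 => a6

@[simp] lemma sv0 (a0 a1 a2 a3 a4 a5 a6 : E3) : sv a0 a1 a2 a3 a4 a5 a6 0 = a0 := rfl
@[simp] lemma sv1 (a0 a1 a2 a3 a4 a5 a6 : E3) : sv a0 a1 a2 a3 a4 a5 a6 1 = a1 := rfl
@[simp] lemma sv2 (a0 a1 a2 a3 a4 a5 a6 : E3) : sv a0 a1 a2 a3 a4 a5 a6 2 = a2 := rfl
@[simp] lemma sv3 (a0 a1 a2 a3 a4 a5 a6 : E3) : sv a0 a1 a2 a3 a4 a5 a6 3 = a3 := rfl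
@[simp] lemma sv4 (a0 a1 a2 a3 a4 a5 a6 : E3) : sv a0 a1 a2 a3 a4 a5 a6 4 = a4 := rfl
@[simp] lemma sv5 (a0 a1 a2 a3 a4 a5 a6 : E3) : sv a0 a1 a2 a3 a4 a5 a6 5 = a5 := rfl
@[simp] lemma sv6 (a0 a1 a2 a3 a4 a5 a6 : E3) : sv a0 a1 a2 a3 a4 a5 a6 6 = a6 := rfl

lemma quad_plus_axis {V : Finset E3} (hcard : V.card ≤ 6) {u v w d : ℝ}
    (hu : u ≠ 0) (hv : v ≠ 0) (hw : w ≠ 0) (hd : d ≠ 0)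
    (hm1 : ∀ i, quad u v w i ∈ V)
    (ha1 : (!₂[d,0,0] : E3) ∈ V) (ha2 : (!₂[-d,0,0] : E3) ∈ V) (ha3 : (!₂[0,d,0] : E3) ∈ V) :
    False := by
  have h7 : (7:ℕ) ≤ V.card := by
    apply cnt V (sv !₂[u,v,w] !₂[u,-v,-w] !₂[-u,v,-w] !₂[-u,-v,w] !₂[d,0,0] !₂[-d,0,0] !₂[0,d,0])
    · intro i; fin_cases i <;>
        first
          | exact hm1 0 | exact hm1 1 | exact hm1 2 | exact hm1 3
          | exact ha1 | exact ha2 | exact ha3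
    · intro i j h
      fin_cases i <;> fin_cases j <;>
        simp_all [vec3_eq, CharZero.eq_neg_self_iff, CharZero.neg_eq_self_iff]
  omega

lemma osix_plus {V : Finset E3} (hcard : V.card ≤ 6) {d e : ℝ}
    (hd : d ≠ 0) (he : e ≠ 0) (habs : |e| ≠ |d|)
    (hm1 : ∀ i, osix d i ∈ V) (ha : (!₂[e,0,0] : E3) ∈ V) : False := by
  have he1 : e ≠ d := fun h => habs (by rw [h])
  have he2 : e ≠ -d := fun h => habs (by rw [h, abs_neg])
  have h7 : (7:ℕ) ≤ V.card := by
    apply cnt V (sv !₂[d,0,0] !₂[-d,0,0] !₂[0,d,0] !₂[0,-d,0] !₂[0,0,d] !₂[0,0,-d] !₂[e,0,0])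
    · intro i; fin_cases i <;>
        first
          | exact hm1 0 | exact hm1 1 | exact hm1 2 | exact hm1 3 | exact hm1 4 | exact hm1 5
          | exact ha
    · intro i j h
      fin_cases i <;> fin_cases j <;>
        simp_all [vec3_eq, CharZero.eq_neg_self_iff, CharZero.neg_eq_self_iff]
  omega


lemma quad_affInd {u v w : ℝ} (hu : u ≠ 0) (hv : v ≠ 0) (hw : w ≠ 0) :
    AffineIndependent ℝ (quad u v w) := by
  rw [affineIndependent_iff]
  intro s wt hsum hcomb e he
  classical
  set W : Fin 4 → ℝ := fun i => if i ∈ s then wt i else 0 with hW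
  have hWsum : ∑ i : Fin 4, W i = 0 := by
    rw [hW]
    simp only [Finset.sum_ite_mem, Finset.univ_inter]
    exact hsum
  have hWcomb : ∑ i : Fin 4, W i • quad u v w i = (0 : E3) := by
    rw [hW]
    simp only [ite_smul, zero_smul]
    rw [Finset.sum_ite_mem, Finset.univ_inter]
    exact hcomb
  rw [Fin.sum_univ_four] at hWsum
  rw [Fin.sum_univ_four] at hWcomb
  have hc : ∀ k : Fin 3,
      W 0 • quad u v w 0 k + W 1 • quad u v w 1 k + W 2 • quad u v w 2 k
        + W 3 • quad u v w 3 k = 0 := by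
    intro k
    have := congrArg (fun v : E3 => v k) hWcomb
    simpa using this
  have h0 := hc 0
  have h1 := hc 1
  have h2 := hc 2
  simp only [quad0, quad1, quad2, quad3, Matrix.cons_val_zero, Matrix.cons_val_one,
    Matrix.head_cons, smul_eq_mul, Matrix.cons_val_two, Matrix.tail_cons] at h0 h1 h2
  have e0 : W 0 + W 1 - W 2 - W 3 = 0 :=
    (mul_eq_zero.mp (by linear_combination h0 : u * (W 0 + W 1 - W 2 - W 3) = 0)).resolve_left hu
  have e1 : W 0 - W 1 + W 2 - W 3 = 0 :=
    (mul_eq_zero.mp (by linear_combination h1 : v * (W 0 - W 1 + W 2 - W 3) = 0)).resolve_left hv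
  have e2 : W 0 - W 1 - W 2 + W 3 = 0 :=
    (mul_eq_zero.mp (by linear_combination h2 : w * (W 0 - W 1 - W 2 + W 3) = 0)).resolve_left hw
  have hWe : W e = 0 := by
    have : W 0 = 0 ∧ W 1 = 0 ∧ W 2 = 0 ∧ W 3 = 0 :=
      ⟨by linarith, by linarith, by linarith, by linarith⟩
    fin_cases e <;> tauto
  rw [hW] at hWe
  simpa [he] using hWe

lemma zero_mem_hull_of_pair {s : Set E3} {x y : E3} (hx : x ∈ s) (hy : y ∈ s)
    (hxy : x + y = 0) : (0 : E3) ∈ convexHull ℝ s := by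
  have hC := convex_convexHull ℝ s
  have h := hC (subset_convexHull ℝ s hx) (subset_convexHull ℝ s hy)
    (by norm_num : (0:ℝ) ≤ 1/2) (by norm_num : (0:ℝ) ≤ 1/2) (by norm_num)
  have h2 : (1/2 : ℝ) • x + (1/2 : ℝ) • y = 0 := by
    rw [← smul_add, hxy, smul_zero]
  rwa [h2] at h


lemma single0 (p : ℝ) : p • EuclideanSpace.single (0 : Fin 3) (1:ℝ) = (!₂[p,0,0] : E3) := by
  ext k
  fin_cases k <;> simp [EuclideanSpace.single_apply, PiLp.smul_apply]
lemma single1 (p : ℝ) : p • EuclideanSpace.single (1 : Fin 3) (1:ℝ) = (!₂[0,p,0] : E3) := by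
  ext k
  fin_cases k <;> simp [EuclideanSpace.single_apply, PiLp.smul_apply]
lemma single2 (p : ℝ) : p • EuclideanSpace.single (2 : Fin 3) (1:ℝ) = (!₂[0,0,p] : E3) := by
  ext k
  fin_cases k <;> simp [EuclideanSpace.single_apply, PiLp.smul_apply]

lemma neg_vec3 (a b c : ℝ) : -(!₂[a,b,c] : E3) = !₂[-a,-b,-c] := by
  ext k
  fin_cases k <;> simp [PiLp.neg_apply]

lemma osix_range_neg (d : ℝ) : Set.range (osix (-d)) = Set.range (osix d) := by
  ext x
  constructor <;> rintro ⟨i, rfl⟩ <;> fin_cases i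
  · exact ⟨1, rfl⟩
  · exact ⟨0, by simp⟩
  · exact ⟨3, rfl⟩
  · exact ⟨2, by simp⟩
  · exact ⟨5, rfl⟩
  · exact ⟨4, by simp⟩
  · exact ⟨1, by simp⟩
  · exact ⟨0, by simp⟩
  · exact ⟨3, by simp⟩
  · exact ⟨2, by simp⟩
  · exact ⟨5, by simp⟩
  · exact ⟨4, by simp⟩

lemma nsingle0 (p : ℝ) : -(p • EuclideanSpace.single (0 : Fin 3) (1:ℝ)) = (!₂[-p,0,0] : E3) := by
  rw [single0, neg_vec3]; norm_num
lemma nsingle1 (p : ℝ) : -(p • EuclideanSpace.single (1 : Fin 3) (1:ℝ)) = (!₂[0,-p,0] : E3) := by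
  rw [single1, neg_vec3]; norm_num
lemma nsingle2 (p : ℝ) : -(p • EuclideanSpace.single (2 : Fin 3) (1:ℝ)) = (!₂[0,0,-p] : E3) := by
  rw [single2, neg_vec3]; norm_num

lemma goal_set_eq (p : ℝ) :
    {x : EuclideanSpace ℝ (Fin 3) |
      ∃ i : Fin 3, x = p • EuclideanSpace.single i (1:ℝ) ∨
        x = -(p • EuclideanSpace.single i (1:ℝ))} = Set.range (osix p) := by
  ext x
  simp only [Set.mem_setOf_eq]
  constructor
  · rintro ⟨i, h | h⟩ <;> subst h <;> fin_cases i
    · exact ⟨0, (single0 p).symm⟩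
    · exact ⟨2, (single1 p).symm⟩
    · exact ⟨4, (single2 p).symm⟩
    · exact ⟨1, (nsingle0 p).symm⟩
    · exact ⟨3, (nsingle1 p).symm⟩
    · exact ⟨5, (nsingle2 p).symm⟩
  · rintro ⟨i, rfl⟩
    fin_cases i
    · exact ⟨0, Or.inl (single0 p).symm⟩
    · exact ⟨0, Or.inr (nsingle0 p).symm⟩
    · exact ⟨1, Or.inl (single1 p).symm⟩
    · exact ⟨1, Or.inr (nsingle1 p).symm⟩
    · exact ⟨2, Or.inl (single2 p).symm⟩
    · exact ⟨2, Or.inr (nsingle2 p).symm⟩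

lemma vec3_zero : (!₂[0,0,0] : E3) = 0 := by
  ext k; fin_cases k <;> rfl

lemma zero_mem_quad_hull (u v w : ℝ) :
    (0:E3) ∈ convexHull ℝ (Set.range (quad u v w)) := by
  have hC := convex_convexHull ℝ (Set.range (quad u v w))
  have h0 := subset_convexHull ℝ (Set.range (quad u v w)) ⟨0, rfl⟩
  have h1 := subset_convexHull ℝ (Set.range (quad u v w)) ⟨1, rfl⟩
  have h2 := subset_convexHull ℝ (Set.range (quad u v w)) ⟨2, rfl⟩
  have h3 := subset_convexHull ℝ (Set.range (quad u v w)) ⟨3, rfl⟩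
  have m1 := hC h0 h1 (by norm_num : (0:ℝ) ≤ 1/2) (by norm_num : (0:ℝ) ≤ 1/2) (by norm_num)
  have m2 := hC h2 h3 (by norm_num : (0:ℝ) ≤ 1/2) (by norm_num : (0:ℝ) ≤ 1/2) (by norm_num)
  have mm := hC m1 m2 (by norm_num : (0:ℝ) ≤ 1/2) (by norm_num : (0:ℝ) ≤ 1/2) (by norm_num)
  have key : ((1/2 : ℝ) • ((1/2 : ℝ) • quad u v w 0 + (1/2 : ℝ) • quad u v w 1)
      + (1/2 : ℝ) • ((1/2 : ℝ) • quad u v w 2 + (1/2 : ℝ) • quad u v w 3)) = (0:E3) := by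
    ext k
    fin_cases k <;>
      simp [quad, PiLp.add_apply, PiLp.smul_apply, smul_eq_mul] <;> ring
  rwa [key] at mm

lemma zero_mem_osix_hull (d : ℝ) :
    (0:E3) ∈ convexHull ℝ (Set.range (osix d)) := by
  refine zero_mem_hull_of_pair (s := Set.range (osix d)) (x := osix d 0) (y := osix d 1) ⟨0, rfl⟩ ⟨1, rfl⟩ ?_
  ext k
  fin_cases k <;> simp [osix, PiLp.add_apply]

theorem stmt5 (P : Set (EuclideanSpace ℝ (Fin 3)))
    (hconv : Convex ℝ P) (hint : (interior P).Nonempty)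
    (hsym : hasTetraSymm P)
    (V : Finset (EuclideanSpace ℝ (Fin 3))) (hcard : V.card ≤ 6)
    (hPV : P = convexHull ℝ (V : Set (EuclideanSpace ℝ (Fin 3)))) :
    (∃ p : Fin 4 → EuclideanSpace ℝ (Fin 3),
        AffineIndependent ℝ p ∧ P = convexHull ℝ (Set.range p)) ∨
    (∃ p : ℝ, 0 < p ∧
        P = convexHull ℝ {x : EuclideanSpace ℝ (Fin 3) |
          ∃ i : Fin 3, x = p • EuclideanSpace.single i (1:ℝ) ∨
            x = -(p • EuclideanSpace.single i (1:ℝ))}) := by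
  classical
  set E : Set E3 := P.extremePoints ℝ with hE
  -- invariance of P under the group generators
  have hPs : (fun x : E3 => (WithLp.toLp 2 (Msig.mulVec x) : E3)) '' P = P := hsym ⟨Msig, Msig_mem⟩ Msig_tetra
  have hPs2 : (fun x : E3 => (WithLp.toLp 2 (Msig2.mulVec x) : E3)) '' P = P := hsym ⟨Msig2, Msig2_mem⟩ Msig2_tetra
  have hPd1 : (fun x : E3 => (WithLp.toLp 2 (Md1.mulVec x) : E3)) '' P = P := hsym ⟨Md1, Md1_mem⟩ Md1_tetra
  have hPd2 : (fun x : E3 => (WithLp.toLp 2 (Md2.mulVec x) : E3)) '' P = P := hsym ⟨Md2, Md2_mem⟩ Md2_tetra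
  have hPd3 : (fun x : E3 => (WithLp.toLp 2 (Md3.mulVec x) : E3)) '' P = P := hsym ⟨Md3, Md3_mem⟩ Md3_tetra
  -- closure of E under the generators
  have hσE : ∀ a b c : ℝ, (!₂[a,b,c] : E3) ∈ E → (!₂[b,c,a] : E3) ∈ E := by
    intro a b c h
    have h2 := extremePoints_closed P _ _ (mulVec_linear Msig) (mulVec_linear Msig2)
      sig_inv1 sig_inv2 hPs hPs2 _ h
    simpa only [Msig_mulVec] using h2
  have hd1E : ∀ a b c : ℝ, (!₂[a,b,c] : E3) ∈ E → (!₂[a,-b,-c] : E3) ∈ E := by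
    intro a b c h
    have h2 := extremePoints_closed P _ _ (mulVec_linear Md1) (mulVec_linear Md1)
      d1_inv d1_inv hPd1 hPd1 _ h
    simpa only [Md1_mulVec] using h2
  have hd2E : ∀ a b c : ℝ, (!₂[a,b,c] : E3) ∈ E → (!₂[-a,b,-c] : E3) ∈ E := by
    intro a b c h
    have h2 := extremePoints_closed P _ _ (mulVec_linear Md2) (mulVec_linear Md2)
      d2_inv d2_inv hPd2 hPd2 _ h
    simpa only [Md2_mulVec] using h2
  have hd3E : ∀ a b c : ℝ, (!₂[a,b,c] : E3) ∈ E → (!₂[-a,-b,c] : E3) ∈ E := by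
    intro a b c h
    have h2 := extremePoints_closed P _ _ (mulVec_linear Md3) (mulVec_linear Md3)
      d3_inv d3_inv hPd3 hPd3 _ h
    simpa only [Md3_mulVec] using h2
  -- basic facts about E
  have hEV : ∀ y ∈ E, y ∈ V := by
    intro y hy
    rw [hE, hPV] at hy
    exact Finset.mem_coe.mp (extremePoints_convexHull_subset hy)
  have hVfin : (V : Set E3).Finite := V.finite_toSet
  have hPcomp : IsCompact P := by rw [hPV]; exact hVfin.isCompact_convexHull ℝ
  have hEfin : E.Finite := hVfin.subset (fun y hy => hEV y hy)
  have hPE : P = convexHull ℝ E := by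
    have h1 := closure_convexHull_extremePoints hPcomp hconv
    rw [← hE] at h1
    rw [(hEfin.isClosed_convexHull ℝ).closure_eq] at h1
    exact h1.symm
  -- a nonzero extreme point exists
  have hnz : ∃ x, x ∈ E ∧ x ≠ 0 := by
    by_contra hcon
    push_neg at hcon
    have hEsub : E ⊆ {(0:E3)} := fun z hz => hcon z hz
    have hPsub : P ⊆ {(0:E3)} := by
      rw [hPE]
      calc convexHull ℝ E ⊆ convexHull ℝ {(0:E3)} := convexHull_mono hEsub
        _ = {(0:E3)} := convexHull_singleton _
    obtain ⟨z, hz⟩ := hint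
    have h2 : z ∈ interior ({(0:E3)} : Set E3) := interior_mono hPsub hz
    rw [interior_singleton] at h2
    exact h2
  obtain ⟨x, hxE, hx0⟩ := hnz
  obtain ⟨a, b, c, hxv, habc0⟩ :
      ∃ a b c : ℝ, (!₂[a,b,c] : E3) ∈ E ∧ ¬(a = 0 ∧ b = 0 ∧ c = 0) := by
    refine ⟨x 0, x 1, x 2, by rw [← vec3_eta x]; exact hxE, ?_⟩
    rintro ⟨h0, h1, h2⟩
    apply hx0
    rw [vec3_eta x, h0, h1, h2, vec3_zero]
  -- the key classification of arbitrary nonzero members of E, needed in both cases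
  by_cases habs : |a| = |b| ∧ |b| = |c|
  · -- tetrahedron case
    obtain ⟨hab, hbc⟩ := habs
    have ha : a ≠ 0 := by
      rintro rfl
      simp only [abs_zero] at hab
      exact habc0 ⟨rfl, abs_eq_zero.mp hab.symm, abs_eq_zero.mp (hbc ▸ hab).symm⟩
    have hb : b = a ∨ b = -a := abs_eq_abs.mp hab.symm
    have hc : c = a ∨ c = -a := abs_eq_abs.mp (hab.trans hbc).symm
    have hbne : b ≠ 0 := by rcases hb with rfl | rfl <;> simpa using ha
    have hcne : c ≠ 0 := by rcases hc with rfl | rfl <;> simpa using ha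
    have hquadE : ∀ i, quad a b c i ∈ E := quad_mem hd1E hd2E hd3E hxv
    refine Or.inl ⟨quad a b c, quad_affInd ha hbne hcne, ?_⟩
    apply Set.Subset.antisymm
    · rw [hPE]
      refine Set.Subset.trans
        (convexHull_mono (?_ : E ⊆ Set.range (quad a b c) ∪ {(0:E3)}))
        (convexHull_min ?_ (convex_convexHull ℝ _))
      · -- E ⊆ range (quad a b c) ∪ {0}
        intro y hy
        by_cases hy0 : y = 0
        · exact Or.inr (Set.mem_singleton_iff.mpr hy0)
        left
        have hyv : (!₂[y 0, y 1, y 2] : E3) ∈ E := by rw [← vec3_eta y]; exact hy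
        have hy00 : ¬(y 0 = 0 ∧ y 1 = 0 ∧ y 2 = 0) := by
          rintro ⟨h0, h1, h2⟩
          exact hy0 (by rw [vec3_eta y, h0, h1, h2, vec3_zero])
        rw [vec3_eta y]
        by_cases h2nz : (y 0 ≠ 0 ∧ y 1 ≠ 0) ∨ (y 0 ≠ 0 ∧ y 2 ≠ 0) ∨ (y 1 ≠ 0 ∧ y 2 ≠ 0)
        · by_cases habs' : |y 0| = |y 1| ∧ |y 1| = |y 2|
          · obtain ⟨hde, hef⟩ := habs'
            have hdne : y 0 ≠ 0 := by
              rintro h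
              rw [h] at hde
              simp only [abs_zero] at hde
              have h1 : y 1 = 0 := abs_eq_zero.mp hde.symm
              have h2 : y 2 = 0 := abs_eq_zero.mp (hef ▸ hde).symm
              exact hy00 ⟨h, h1, h2⟩
            have hene : y 1 ≠ 0 := fun h => hdne (abs_eq_zero.mp (hde.trans (by rw [h, abs_zero])))
            have hfne : y 2 ≠ 0 := fun h => hene (abs_eq_zero.mp (hef.trans (by rw [h, abs_zero])))
            by_cases hda : |y 0| = |a|
            · exact tetra_absorb hEV hcard hd1E hd2E hd3E ha hb hc hxv hyv
                (abs_eq_abs.mp hda) (abs_eq_abs.mp (hde.symm.trans hda))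
                (abs_eq_abs.mp ((hef.symm.trans hde.symm).trans hda))
            · exfalso
              exact eight hEV hcard (quad_mem hd1E hd2E hd3E hyv) (quad_mem hd1E hd2E hd3E hxv)
                hda (Or.inl hene) (Or.inl hdne) (Or.inl hdne)
                (Or.inl hbne) (Or.inl ha) (Or.inl ha)
          · exact absurd (no_middle hEV hcard hd1E hd2E hd3E hσE hyv h2nz habs') id
        · -- y has exactly one nonzero coordinate: contradiction
          exfalso
          push_neg at h2nz
          obtain ⟨h12, h13, h23⟩ := h2nz
          have haxis : ∃ g : ℝ, g ≠ 0 ∧ (!₂[g,0,0] : E3) ∈ E := by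
            by_cases h0 : y 0 = 0
            · by_cases h1 : y 1 = 0
              · refine ⟨y 2, fun h => hy00 ⟨h0, h1, h⟩, ?_⟩
                have := hσE _ _ _ (hσE _ _ _ hyv)
                rwa [h0, h1] at this
              · refine ⟨y 1, h1, ?_⟩
                have h2 : y 2 = 0 := (h23 h1)
                have := hσE _ _ _ hyv
                rwa [h0, h2] at this
            · refine ⟨y 0, h0, ?_⟩
              have h1 : y 1 = 0 := h12 h0
              have h2 : y 2 = 0 := h13 h0
              rwa [h1, h2] at hyv
          obtain ⟨g, hg0, hgE⟩ := haxis
          obtain ⟨o1, o2, o3, -, -, -⟩ := octa_mem hd3E hσE hgE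
          exact quad_plus_axis hcard ha hbne hcne hg0
            (fun i => hEV _ (hquadE i)) (hEV _ o1) (hEV _ o2) (hEV _ o3)
      · rintro y (hy | hy)
        · exact subset_convexHull ℝ _ hy
        · rw [Set.mem_singleton_iff] at hy
          rw [hy]
          exact zero_mem_quad_hull a b c
    · rw [hPE]
      refine convexHull_mono ?_
      rintro z ⟨i, rfl⟩
      exact hquadE i
  · -- octahedron case
    -- x must have exactly one nonzero coordinate
    have h2nz : ¬((a ≠ 0 ∧ b ≠ 0) ∨ (a ≠ 0 ∧ c ≠ 0) ∨ (b ≠ 0 ∧ c ≠ 0)) := by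
      intro h
      exact no_middle hEV hcard hd1E hd2E hd3E hσE hxv h habs
    push_neg at h2nz
    obtain ⟨h12, h13, h23⟩ := h2nz
    have haxis : ∃ g : ℝ, g ≠ 0 ∧ (!₂[g,0,0] : E3) ∈ E := by
      by_cases h0 : a = 0
      · by_cases h1 : b = 0
        · refine ⟨c, fun h => habc0 ⟨h0, h1, h⟩, ?_⟩
          have := hσE _ _ _ (hσE _ _ _ hxv)
          rwa [h0, h1] at this
        · refine ⟨b, h1, ?_⟩
          have h2 : c = 0 := (h23 h1)
          have := hσE _ _ _ hxv
          rwa [h0, h2] at this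
      · refine ⟨a, h0, ?_⟩
        have h1 : b = 0 := h12 h0
        have h2 : c = 0 := h13 h0
        rwa [h1, h2] at hxv
    obtain ⟨g, hg0, hgE⟩ := haxis
    refine Or.inr ⟨|g|, abs_pos.mpr hg0, ?_⟩
    rw [goal_set_eq]
    have hrange : Set.range (osix |g|) = Set.range (osix g) := by
      rcases abs_choice g with h | h
      · rw [h]
      · rw [h, osix_range_neg]
    rw [hrange]
    obtain ⟨o1, o2, o3, o4, o5, o6⟩ := octa_mem hd3E hσE hgE
    have hosixE : ∀ i, osix g i ∈ E := by
      intro i; fin_cases i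
      exacts [o1, o2, o3, o4, o5, o6]
    apply Set.Subset.antisymm
    · rw [hPE]
      refine Set.Subset.trans
        (convexHull_mono (?_ : E ⊆ Set.range (osix g) ∪ {(0:E3)}))
        (convexHull_min ?_ (convex_convexHull ℝ _))
      · -- E ⊆ range (osix g) ∪ {0}
        intro y hy
        by_cases hy0 : y = 0
        · exact Or.inr (Set.mem_singleton_iff.mpr hy0)
        left
        have hyv : (!₂[y 0, y 1, y 2] : E3) ∈ E := by rw [← vec3_eta y]; exact hy
        have hy00 : ¬(y 0 = 0 ∧ y 1 = 0 ∧ y 2 = 0) := by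
          rintro ⟨h0, h1, h2⟩
          exact hy0 (by rw [vec3_eta y, h0, h1, h2, vec3_zero])
        by_cases hy2nz : (y 0 ≠ 0 ∧ y 1 ≠ 0) ∨ (y 0 ≠ 0 ∧ y 2 ≠ 0) ∨ (y 1 ≠ 0 ∧ y 2 ≠ 0)
        · exfalso
          by_cases habs' : |y 0| = |y 1| ∧ |y 1| = |y 2|
          · obtain ⟨hde, hef⟩ := habs'
            have hdne : y 0 ≠ 0 := by
              rintro h
              rw [h] at hde
              simp only [abs_zero] at hde
              exact hy00 ⟨h, abs_eq_zero.mp hde.symm, abs_eq_zero.mp (hef ▸ hde).symm⟩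
            have hene : y 1 ≠ 0 := fun h => hdne (abs_eq_zero.mp (hde.trans (by rw [h, abs_zero])))
            have hfne : y 2 ≠ 0 := fun h => hene (abs_eq_zero.mp (hef.trans (by rw [h, abs_zero])))
            exact quad_plus_axis hcard hdne hene hfne hg0
              (fun i => hEV _ (quad_mem hd1E hd2E hd3E hyv i)) (hEV _ o1) (hEV _ o2) (hEV _ o3)
          · exact no_middle hEV hcard hd1E hd2E hd3E hσE hyv hy2nz habs'
        · push_neg at hy2nz
          obtain ⟨h12', h13', h23'⟩ := hy2nz
          -- y is an axis point; determine its position and value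
          by_cases h0 : y 0 = 0
          · by_cases h1 : y 1 = 0
            · -- y = (0,0,m)
              have hm : y 2 ≠ 0 := fun h => hy00 ⟨h0, h1, h⟩
              have hmE : (!₂[y 2,0,0] : E3) ∈ E := by
                have := hσE _ _ _ (hσE _ _ _ hyv)
                rwa [h0, h1] at this
              by_cases hma : |y 2| = |g|
              · rw [vec3_eta y, h0, h1]
                rcases abs_eq_abs.mp hma with h | h
                · exact ⟨4, by rw [h]; rfl⟩
                · exact ⟨5, by rw [h]; simp [vec3_eq]⟩
              · exact absurd (osix_plus hcard hg0 hm hma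
                  (fun i => hEV _ (hosixE i)) (hEV _ hmE)) id
            · -- y = (0,m,0)
              have hm : y 1 ≠ 0 := h1
              have h2 : y 2 = 0 := h23' h1
              have hmE : (!₂[y 1,0,0] : E3) ∈ E := by
                have := hσE _ _ _ hyv
                rwa [h0, h2] at this
              by_cases hma : |y 1| = |g|
              · rw [vec3_eta y, h0, h2]
                rcases abs_eq_abs.mp hma with h | h
                · exact ⟨2, by rw [h]; rfl⟩
                · exact ⟨3, by rw [h]; simp [vec3_eq]⟩
              · exact absurd (osix_plus hcard hg0 hm hma
                  (fun i => hEV _ (hosixE i)) (hEV _ hmE)) id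
          · -- y = (m,0,0)
            have h1 : y 1 = 0 := h12' h0
            have h2 : y 2 = 0 := h13' h0
            have hmE : (!₂[y 0,0,0] : E3) ∈ E := by rwa [h1, h2] at hyv
            by_cases hma : |y 0| = |g|
            · rw [vec3_eta y, h1, h2]
              rcases abs_eq_abs.mp hma with h | h
              · exact ⟨0, by rw [h]; rfl⟩
              · exact ⟨1, by rw [h]; simp [vec3_eq]⟩
            · exact absurd (osix_plus hcard hg0 h0 hma
                (fun i => hEV _ (hosixE i)) (hEV _ hmE)) id
      · rintro y (hy | hy)
        · exact subset_convexHull ℝ _ hy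
        · rw [Set.mem_singleton_iff] at hy
          rw [hy]
          exact zero_mem_osix_hull g
    · rw [hPE]
      refine convexHull_mono ?_
      rintro z ⟨i, rfl⟩
      exact hosixE i
end

section
/- Let K be a convex body in ℝ² containing points p₁, p₂, p₃, p₄ such that |K| = (1/2)·|det(p₃ − p₁, p₄ − p₂)|. Then K = conv{p₁, p₂, p₃, p₄}. -/
open MeasureTheory Pointwise

namespace Stmt8Aux

abbrev V := EuclideanSpace ℝ (Fin 2)

noncomputable def E0 : V := WithLp.toLp 2 (![1,0] : Fin 2 → ℝ)
noncomputable def E1 : V := WithLp.toLp 2 (![0,1] : Fin 2 → ℝ)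

noncomputable def detv (u v : V) : ℝ := u 0 * v 1 - u 1 * v 0

noncomputable def gmap (u : V) : V →ₗ[ℝ] ℝ where
  toFun x := u 0 * x 1 - u 1 * x 0
  map_add' x y := by simp only [PiLp.add_apply]; ring
  map_smul' c x := by simp only [PiLp.smul_apply, smul_eq_mul, RingHom.id_apply]; ring

theorem gmap_apply (u x : V) : gmap u x = u 0 * x 1 - u 1 * x 0 := rfl

theorem line_null (u : V) (hu : u ≠ 0) (c : ℝ) : volume {x : V | gmap u x = c} = 0 := by
  have hz : gmap u (WithLp.toLp 2 (![-(u 1), u 0] : Fin 2 → ℝ)) = u 0 * u 0 + u 1 * u 1 := by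
    show u 0 * _ - u 1 * _ = _
    simp only [PiLp.toLp_apply, Matrix.cons_val_zero, Matrix.cons_val_one, Matrix.head_cons]
    ring
  have hpos : (0:ℝ) < u 0 * u 0 + u 1 * u 1 := by
    rcases eq_or_ne (u 0) 0 with h' | h'
    · have h1 : u 1 ≠ 0 := by
        intro h''
        exact hu (by ext j; fin_cases j <;> simp [h', h''])
      nlinarith [mul_self_pos.2 h1, mul_self_nonneg (u 0)]
    · nlinarith [mul_self_pos.2 h', mul_self_nonneg (u 1)]
  set w : V := (c / (u 0 * u 0 + u 1 * u 1)) • (WithLp.toLp 2 (![-(u 1), u 0] : Fin 2 → ℝ)) with hw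
  have hgw : gmap u w = c := by
    rw [hw, _root_.map_smul, hz, smul_eq_mul, div_mul_cancel₀ _ hpos.ne']
  have hset : {x : V | gmap u x = c} = w +ᵥ ((LinearMap.ker (gmap u) : Submodule ℝ V) : Set V) := by
    ext x
    simp only [Set.mem_setOf_eq, Set.mem_vadd_set, SetLike.mem_coe, LinearMap.mem_ker]
    constructor
    · intro hx
      exact ⟨x - w, by rw [map_sub, hx, hgw, sub_self], by simp [vadd_eq_add]⟩
    · rintro ⟨y, hy, rfl⟩
      simp [vadd_eq_add, map_add, hy, hgw]
  rw [hset, measure_vadd]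
  apply Measure.addHaar_submodule
  intro htop
  have h2 : gmap u (WithLp.toLp 2 (![-(u 1), u 0] : Fin 2 → ℝ)) = 0 := by
    have : ((WithLp.toLp 2 (![-(u 1), u 0] : Fin 2 → ℝ)) : V) ∈ LinearMap.ker (gmap u) := by
      rw [htop]; trivial
    exact this
  rw [hz] at h2
  exact hpos.ne' h2

theorem subset_of_measure_le {s t : Set V} (hsc : IsClosed s)
    (hst : s ⊆ t) (ht : Convex ℝ t) (hti : volume t ≠ ⊤)
    (hsi : (interior s).Nonempty) (hvol : volume t ≤ volume s) : t ⊆ s := by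
  by_contra hx
  obtain ⟨x, hxt, hxs⟩ := Set.not_subset.1 hx
  obtain ⟨y, hy⟩ := hsi
  have hyt : y ∈ interior t := interior_mono hst hy
  have hcont : ContinuousAt (fun ε : ℝ => (1 - ε) • x + ε • y) 0 := by fun_prop
  have hmem : ∀ᶠ ε : ℝ in nhds 0, (1 - ε) • x + ε • y ∈ sᶜ := by
    apply hcont.eventually_mem (hsc.isOpen_compl.mem_nhds ?_)
    simpa using hxs
  have h2 : ∀ᶠ ε : ℝ in nhdsWithin 0 (Set.Ioo 0 1), (1 - ε) • x + ε • y ∈ sᶜ ∧ ε ∈ Set.Ioo 0 1 :=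
    (hmem.filter_mono nhdsWithin_le_nhds).and self_mem_nhdsWithin
  have hne : (nhdsWithin (0:ℝ) (Set.Ioo 0 1)).NeBot := left_nhdsWithin_Ioo_neBot one_pos
  obtain ⟨ε, hz1, hz2⟩ := h2.exists
  set z := (1 - ε) • x + ε • y with hzdef
  have hzint : z ∈ interior t :=
    Convex.combo_self_interior_mem_interior ht hxt hyt
      (by linarith [hz2.2] : (0:ℝ) ≤ 1 - ε) hz2.1 (by ring)
  have hU : (interior t ∩ sᶜ).Nonempty := ⟨z, hzint, hz1⟩
  have hUopen : IsOpen (interior t ∩ sᶜ) := isOpen_interior.inter hsc.isOpen_compl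
  have hUpos : 0 < volume (interior t ∩ sᶜ) := hUopen.measure_pos volume hU
  have hdisj : Disjoint s (interior t ∩ sᶜ) := Set.disjoint_left.2 fun a ha ⟨_, h2⟩ => h2 ha
  have hsub : s ∪ (interior t ∩ sᶜ) ⊆ t :=
    Set.union_subset hst ((Set.inter_subset_left).trans interior_subset)
  have hlt : volume s < volume t := by
    calc volume s < volume s + volume (interior t ∩ sᶜ) := by
            refine ENNReal.lt_add_right ?_ hUpos.ne'
            exact ((measure_mono hst).trans_lt (lt_of_le_of_ne le_top hti)).ne
      _ = volume (s ∪ (interior t ∩ sᶜ)) := (measure_union' hdisj hsc.measurableSet).symm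
      _ ≤ volume t := measure_mono hsub
  exact hlt.not_ge hvol

theorem simplex_vol_prod :
    volume {p : ℝ × ℝ | 0 ≤ p.1 ∧ 0 ≤ p.2 ∧ p.1 + p.2 ≤ 1} = ENNReal.ofReal (1/2) := by
  have hmeas : MeasurableSet {p : ℝ × ℝ | 0 ≤ p.1 ∧ 0 ≤ p.2 ∧ p.1 + p.2 ≤ 1} := by
    apply MeasurableSet.inter
    · exact measurableSet_le measurable_const measurable_fst
    apply MeasurableSet.inter
    · exact measurableSet_le measurable_const measurable_snd
    · exact measurableSet_le (measurable_fst.add measurable_snd) measurable_const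
  have hp : (volume : Measure (ℝ × ℝ)) = (volume : Measure ℝ).prod volume := rfl
  rw [hp, Measure.prod_apply hmeas]
  have hsec : ∀ x : ℝ, (Prod.mk x ⁻¹' {p : ℝ × ℝ | 0 ≤ p.1 ∧ 0 ≤ p.2 ∧ p.1 + p.2 ≤ 1}) =
      if x ∈ Set.Icc (0:ℝ) 1 then Set.Icc 0 (1 - x) else ∅ := by
    intro x
    ext y
    simp only [Set.mem_preimage, Set.mem_setOf_eq]
    by_cases hx : x ∈ Set.Icc (0:ℝ) 1
    · rw [if_pos hx, Set.mem_Icc]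
      rw [Set.mem_Icc] at hx
      constructor
      · rintro ⟨_, h2, h3⟩; exact ⟨h2, by linarith⟩
      · rintro ⟨h2, h3⟩; exact ⟨hx.1, h2, by linarith⟩
    · rw [if_neg hx]
      rw [Set.mem_Icc] at hx; push_neg at hx
      simp only [Set.mem_empty_iff_false, iff_false]
      rintro ⟨h1, h2, h3⟩
      linarith [hx h1]
  calc ∫⁻ x, volume (Prod.mk x ⁻¹' {p : ℝ × ℝ | 0 ≤ p.1 ∧ 0 ≤ p.2 ∧ p.1 + p.2 ≤ 1})
      = ∫⁻ x, Set.indicator (Set.Icc 0 1) (fun x => ENNReal.ofReal (1 - x)) x := by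
        congr 1; funext x
        rw [hsec x]
        by_cases hx : x ∈ Set.Icc (0:ℝ) 1 <;>
          simp [hx, Real.volume_Icc]
    _ = ∫⁻ x in Set.Icc (0:ℝ) 1, ENNReal.ofReal (1 - x) := lintegral_indicator measurableSet_Icc _
    _ = ENNReal.ofReal (∫ x in Set.Icc (0:ℝ) 1, (1 - x)) := by
        rw [← ofReal_integral_eq_lintegral_ofReal]
        · exact ContinuousOn.integrableOn_compact isCompact_Icc (by fun_prop)
        · filter_upwards [ae_restrict_mem measurableSet_Icc] with x hx
          rw [Set.mem_Icc] at hx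
          simp only [Pi.zero_apply]
          linarith [hx.2]
    _ = ENNReal.ofReal (1/2) := by
        congr 1
        rw [MeasureTheory.integral_Icc_eq_integral_Ioc,
          ← intervalIntegral.integral_of_le zero_le_one]
        have h : ∫ x in (0:ℝ)..1, (1 - x) =
            (∫ _x in (0:ℝ)..1, (1:ℝ)) - ∫ x in (0:ℝ)..1, x :=
          intervalIntegral.integral_sub intervalIntegrable_const
            intervalIntegral.intervalIntegrable_id
        rw [h, integral_id, intervalIntegral.integral_const]
        norm_num

theorem simplex_vol_V :
    volume {x : V | 0 ≤ x 0 ∧ 0 ≤ x 1 ∧ x 0 + x 1 ≤ 1} = ENNReal.ofReal (1/2) := by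
  have F := EuclideanSpace.volume_preserving_symm_measurableEquiv_toLp (Fin 2)
  have G := volume_preserving_piFinTwo (fun _ : Fin 2 => ℝ)
  have H := (G.comp F).measure_preimage (s := {p : ℝ × ℝ | 0 ≤ p.1 ∧ 0 ≤ p.2 ∧ p.1 + p.2 ≤ 1})
    (by
      apply MeasurableSet.nullMeasurableSet
      apply MeasurableSet.inter
      · exact measurableSet_le measurable_const measurable_fst
      apply MeasurableSet.inter
      · exact measurableSet_le measurable_const measurable_snd
      · exact measurableSet_le (measurable_fst.add measurable_snd) measurable_const)
  have hpre : ((MeasurableEquiv.piFinTwo (fun _ : Fin 2 => ℝ)) ∘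
      (MeasurableEquiv.toLp 2 (Fin 2 → ℝ)).symm) ⁻¹'
      {p : ℝ × ℝ | 0 ≤ p.1 ∧ 0 ≤ p.2 ∧ p.1 + p.2 ≤ 1} =
      {x : V | 0 ≤ x 0 ∧ 0 ≤ x 1 ∧ x 0 + x 1 ≤ 1} := rfl
  rw [← simplex_vol_prod, ← H, hpre]

theorem hull_eq_simplex :
    convexHull ℝ {(0:V), E0, E1} = {x : V | 0 ≤ x 0 ∧ 0 ≤ x 1 ∧ x 0 + x 1 ≤ 1} := by
  apply Set.Subset.antisymm
  · apply convexHull_min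
    · rintro x (rfl | rfl | rfl)
      · exact ⟨le_refl 0, le_refl 0, by norm_num⟩
      · refine ⟨by norm_num [E0], by norm_num [E0], by norm_num [E0]⟩
      · refine ⟨by norm_num [E1], by norm_num [E1], by norm_num [E1]⟩
    · have c0 : Convex ℝ {x : V | 0 ≤ x 0} :=
        convex_halfSpace_ge ⟨fun a b => by simp [PiLp.add_apply],
          fun c a => by simp [PiLp.smul_apply]⟩ 0
      have c1 : Convex ℝ {x : V | 0 ≤ x 1} :=
        convex_halfSpace_ge ⟨fun a b => by simp [PiLp.add_apply],
          fun c a => by simp [PiLp.smul_apply]⟩ 0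
      have c2 : Convex ℝ {x : V | x 0 + x 1 ≤ 1} :=
        convex_halfSpace_le ⟨fun a b => by simp [PiLp.add_apply]; ring,
          fun c a => by simp [PiLp.smul_apply]; ring⟩ 1
      exact (c0.inter (c1.inter c2))
  · rintro x ⟨h0, h1, h2⟩
    have hx : x = (1 - x 0 - x 1) • (0:V) + x 0 • E0 + x 1 • E1 := by
      ext j
      fin_cases j <;>
        simp [E0, E1, PiLp.add_apply, PiLp.smul_apply]
    rw [hx]
    have hconv : Convex ℝ (convexHull ℝ {(0:V), E0, E1}) := convex_convexHull ℝ _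
    have m0 : (0:V) ∈ convexHull ℝ {(0:V), E0, E1} := subset_convexHull ℝ _ (by simp)
    have m1 : E0 ∈ convexHull ℝ {(0:V), E0, E1} := subset_convexHull ℝ _ (by simp)
    have m2 : E1 ∈ convexHull ℝ {(0:V), E0, E1} := subset_convexHull ℝ _ (by simp)
    have hsum : ∑ i : Fin 3, (![1 - x 0 - x 1, x 0, x 1] i) • (![(0:V), E0, E1] i) ∈
        convexHull ℝ {(0:V), E0, E1} := by
      apply hconv.sum_mem
      · intro i _; fin_cases i <;> simp <;> linarith
      · simp [Fin.sum_univ_three]; ring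
      · intro i _; fin_cases i <;> simp [m0, m1, m2]
    simpa [Fin.sum_univ_three] using hsum

theorem tri_vol (a b c : V) : volume (convexHull ℝ {a, b, c}) =
    ENNReal.ofReal ((1/2) * |detv (b - a) (c - a)|) := by
  set bb := EuclideanSpace.basisFun (Fin 2) ℝ with hbb
  set f : V →ₗ[ℝ] V := (bb.toBasis.constr ℝ) ![b - a, c - a] with hf
  have hb0 : bb.toBasis 0 = E0 := by
    ext j; fin_cases j <;>
      simp [E0, hbb, EuclideanSpace.basisFun_apply, EuclideanSpace.single_apply]
  have hb1 : bb.toBasis 1 = E1 := by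
    ext j; fin_cases j <;>
      simp [E1, hbb, EuclideanSpace.basisFun_apply, EuclideanSpace.single_apply]
  have hf0 : f E0 = b - a := by rw [← hb0, hf, Module.Basis.constr_basis]; rfl
  have hf1 : f E1 = c - a := by rw [← hb1, hf, Module.Basis.constr_basis]; rfl
  have himg : convexHull ℝ {a, b, c} = a +ᵥ (f '' (convexHull ℝ {(0:V), E0, E1})) := by
    rw [f.image_convexHull, ← convexHull_vadd]
    congr 1
    ext x
    simp only [Set.mem_insert_iff, Set.mem_singleton_iff, ← Set.image_vadd,
      Set.image_insert_eq, Set.image_singleton, map_zero, hf0, hf1, vadd_eq_add,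
      add_zero, add_sub_cancel]
  rw [himg, measure_vadd, Measure.addHaar_image_linearMap, hull_eq_simplex, simplex_vol_V]
  have hdet : LinearMap.det f = detv (b - a) (c - a) := by
    rw [← LinearMap.det_toMatrix bb.toBasis f, Matrix.det_fin_two]
    simp only [LinearMap.toMatrix_apply, hb0, hb1, hf0, hf1]
    simp [hbb, detv]
    ring
  rw [hdet, ← ENNReal.ofReal_mul (abs_nonneg _)]
  congr 1
  ring

theorem tri_interior_nonempty (a b c : V) (h : detv (b - a) (c - a) ≠ 0) :
    (interior (convexHull ℝ {a, b, c})).Nonempty := by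
  by_contra hemp
  rw [Set.not_nonempty_iff_eq_empty] at hemp
  have hconv : Convex ℝ (convexHull ℝ {a, b, c}) := convex_convexHull ℝ _
  have hspan : affineSpan ℝ (convexHull ℝ {a, b, c}) ≠ ⊤ := by
    intro htop
    rw [← hconv.interior_nonempty_iff_affineSpan_eq_top] at htop
    rw [hemp] at htop
    exact Set.not_nonempty_empty htop
  have hnull : volume (convexHull ℝ {a, b, c}) = 0 :=
    measure_mono_null (subset_affineSpan ℝ _) (Measure.addHaar_affineSubspace _ _ hspan)
  rw [tri_vol] at hnull
  rw [ENNReal.ofReal_eq_zero] at hnull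
  have : 0 < (1/2 : ℝ) * |detv (b - a) (c - a)| := by positivity
  linarith

theorem detv_eq_gmap (u v : V) : detv u v = gmap u v := rfl

theorem main_aux (K : Set V) (hconv : Convex ℝ K) (hcomp : IsCompact K)
    (hint : (interior K).Nonempty) (p₁ p₂ p₃ p₄ : V)
    (h₁ : p₁ ∈ K) (h₂ : p₂ ∈ K) (h₃ : p₃ ∈ K) (h₄ : p₄ ∈ K)
    (hd2 : gmap (p₃ - p₁) (p₂ - p₁) ≤ 0) (hd4 : 0 ≤ gmap (p₃ - p₁) (p₄ - p₁))
    (harea' : (volume K).toReal =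
      (1/2) * |gmap (p₃ - p₁) (p₄ - p₁) - gmap (p₃ - p₁) (p₂ - p₁)|) :
    K = convexHull ℝ {p₁, p₂, p₃, p₄} := by
  set u : V := p₃ - p₁ with hu
  set d₄ : ℝ := gmap u (p₄ - p₁) with hd₄
  set d₂ : ℝ := gmap u (p₂ - p₁) with hd₂
  have hKfin : volume K ≠ ⊤ := hcomp.measure_lt_top.ne
  have hKpos : 0 < (volume K).toReal := by
    refine ENNReal.toReal_pos ?_ hKfin
    exact ((isOpen_interior.measure_pos volume hint).trans_le
      (measure_mono interior_subset)).ne'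
  have hune : u ≠ 0 := by
    intro h0
    have e0 : u 0 = 0 := by rw [h0]; rfl
    have e1 : u 1 = 0 := by rw [h0]; rfl
    have e4 : d₄ = 0 := by rw [hd₄, gmap_apply, e0, e1]; ring
    have e2 : d₂ = 0 := by rw [hd₂, gmap_apply, e0, e1]; ring
    rw [harea', e4, e2] at hKpos
    simp at hKpos
  set c : ℝ := gmap u p₁ with hc
  set Hp : Set V := {x | c ≤ gmap u x} with hHp
  set Hm : Set V := {x | gmap u x ≤ c} with hHm
  have hHpconv : Convex ℝ Hp := convex_halfSpace_ge (gmap u).isLinear c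
  have hHmconv : Convex ℝ Hm := convex_halfSpace_le (gmap u).isLinear c
  have hgc : Continuous (gmap u) := (gmap u).continuous_of_finiteDimensional
  have hHpcl : IsClosed Hp := isClosed_le continuous_const hgc
  have hHmcl : IsClosed Hm := isClosed_le hgc continuous_const
  have huu : gmap u u = 0 := by rw [gmap_apply]; ring
  have hp3 : gmap u p₃ = c := by
    have h := (gmap u).map_sub p₃ p₁
    rw [← hu] at h
    rw [huu] at h
    rw [hc]; linarith
  have hp4 : gmap u p₄ = c + d₄ := by
    have h := (gmap u).map_sub p₄ p₁
    rw [← hd₄] at h; rw [hc]; linarith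
  have hp2 : gmap u p₂ = c + d₂ := by
    have h := (gmap u).map_sub p₂ p₁
    rw [← hd₂] at h; rw [hc]; linarith
  have hm1p : p₁ ∈ Hp := le_refl c
  have hm1m : p₁ ∈ Hm := le_refl c
  have hm3p : p₃ ∈ Hp := by rw [hHp]; exact hp3.ge
  have hm3m : p₃ ∈ Hm := by rw [hHm]; exact hp3.le
  have hm4p : p₄ ∈ Hp := by rw [hHp]; show c ≤ gmap u p₄; rw [hp4]; linarith
  have hm2m : p₂ ∈ Hm := by rw [hHm]; show gmap u p₂ ≤ c; rw [hp2]; linarith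
  -- triangles
  set T4 : Set V := convexHull ℝ {p₁, p₃, p₄} with hT4
  set T2 : Set V := convexHull ℝ {p₁, p₃, p₂} with hT2
  have hT4sub : T4 ⊆ K ∩ Hp := by
    apply convexHull_min _ (hconv.inter hHpconv)
    rintro x (rfl | rfl | rfl)
    exacts [⟨h₁, hm1p⟩, ⟨h₃, hm3p⟩, ⟨h₄, hm4p⟩]
  have hT2sub : T2 ⊆ K ∩ Hm := by
    apply convexHull_min _ (hconv.inter hHmconv)
    rintro x (rfl | rfl | rfl)
    exacts [⟨h₁, hm1m⟩, ⟨h₃, hm3m⟩, ⟨h₂, hm2m⟩]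
  have hT4K : T4 ⊆ K := hT4sub.trans Set.inter_subset_left
  have hT2K : T2 ⊆ K := hT2sub.trans Set.inter_subset_left
  have hvolT4 : volume T4 = ENNReal.ofReal ((1/2) * d₄) := by
    rw [hT4, tri_vol, detv_eq_gmap, ← hu, ← hd₄, abs_of_nonneg hd4]
  have hvolT2 : volume T2 = ENNReal.ofReal ((1/2) * (-d₂)) := by
    rw [hT2, tri_vol, detv_eq_gmap, ← hu, ← hd₂, abs_of_nonpos hd2]
  -- splitting
  have hcover : K = (K ∩ Hp) ∪ (K ∩ Hm) := by
    ext x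
    constructor
    · intro hx
      rcases le_total c (gmap u x) with h | h
      · exact Or.inl ⟨hx, h⟩
      · exact Or.inr ⟨hx, h⟩
    · rintro (⟨hx, _⟩ | ⟨hx, _⟩) <;> exact hx
  have hlineK : volume ((K ∩ Hp) ∩ (K ∩ Hm)) = 0 := by
    refine measure_mono_null ?_ (line_null u hune c)
    rintro x ⟨⟨_, hx1⟩, ⟨_, hx2⟩⟩
    exact le_antisymm hx2 hx1
  have hmeasHm : MeasurableSet (K ∩ Hm) := (hcomp.isClosed.inter hHmcl).measurableSet
  have hsplit : volume K = volume (K ∩ Hp) + volume (K ∩ Hm) := by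
    have h := measure_union_add_inter (μ := volume) (K ∩ Hp) hmeasHm
    rw [hlineK, add_zero] at h
    rw [← h, ← hcover]
  set A := volume (K ∩ Hp) with hA
  set B := volume (K ∩ Hm) with hB
  have hAle : A ≤ volume K := measure_mono Set.inter_subset_left
  have hBle : B ≤ volume K := measure_mono Set.inter_subset_left
  have hAfin : A ≠ ⊤ := (hAle.trans_lt (lt_of_le_of_ne le_top hKfin)).ne
  have hBfin : B ≠ ⊤ := (hBle.trans_lt (lt_of_le_of_ne le_top hKfin)).ne
  have hA4 : (1/2) * d₄ ≤ A.toReal := by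
    have h := measure_mono (μ := volume) hT4sub
    rw [hvolT4] at h
    have := ENNReal.toReal_mono hAfin h
    rwa [ENNReal.toReal_ofReal (by positivity)] at this
  have hB2 : (1/2) * (-d₂) ≤ B.toReal := by
    have h := measure_mono (μ := volume) hT2sub
    rw [hvolT2] at h
    have := ENNReal.toReal_mono hBfin h
    rwa [ENNReal.toReal_ofReal (by nlinarith)] at this
  have htotal : (volume K).toReal = A.toReal + B.toReal := by
    rw [hsplit, ENNReal.toReal_add hAfin hBfin]
  have harea2 : (volume K).toReal = (1/2) * d₄ + (1/2) * (-d₂) := by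
    rw [harea', abs_of_nonneg (by linarith)]; ring
  have hAeq : A.toReal = (1/2) * d₄ := by linarith
  have hBeq : B.toReal = (1/2) * (-d₂) := by linarith
  -- the hull
  set Q : Set V := convexHull ℝ {p₁, p₂, p₃, p₄} with hQ
  have hQK : Q ⊆ K := by
    apply convexHull_min _ hconv
    rintro x (rfl | rfl | rfl | rfl)
    exacts [h₁, h₂, h₃, h₄]
  have hT4Q : T4 ⊆ Q := convexHull_mono (by intro x hx; simp at hx ⊢; tauto)
  have hT2Q : T2 ⊆ Q := convexHull_mono (by intro x hx; simp at hx ⊢; tauto)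
  have hdegen : ∀ (H' : Set V), IsClosed H' → (interior K ⊆ H') → K ⊆ H' := by
    intro H' hcl hIntH' x hxK
    obtain ⟨y, hy⟩ := hint
    have htend : Filter.Tendsto (fun ε : ℝ => (1 - ε) • x + ε • y)
        (nhdsWithin 0 (Set.Ioo 0 1)) (nhds x) := by
      have hco : ContinuousAt (fun ε : ℝ => (1 - ε) • x + ε • y) 0 := by fun_prop
      have h' := hco.tendsto.mono_left (nhdsWithin_le_nhds (s := Set.Ioo (0:ℝ) 1))
      simpa using h'
    have hev : ∀ᶠ ε in nhdsWithin (0:ℝ) (Set.Ioo 0 1), (1 - ε) • x + ε • y ∈ H' := by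
      filter_upwards [self_mem_nhdsWithin] with ε hε
      exact hIntH' (hconv.combo_self_interior_mem_interior hxK hy
        (by linarith [hε.2]) hε.1 (by ring))
    have hne : (nhdsWithin (0:ℝ) (Set.Ioo 0 1)).NeBot := left_nhdsWithin_Ioo_neBot one_pos
    exact hcl.mem_of_tendsto htend hev
  have hT4cl : IsClosed T4 := ((Set.toFinite _).isCompact_convexHull ℝ).isClosed
  have hT2cl : IsClosed T2 := ((Set.toFinite _).isCompact_convexHull ℝ).isClosed
  by_cases h40 : d₄ = 0
  · have hA0 : A = 0 := by
      have hz : A.toReal = 0 := by rw [hAeq, h40]; ring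
      exact (ENNReal.toReal_eq_zero_iff _).1 hz |>.resolve_right hAfin
    have hIntHm : interior K ⊆ Hm := by
      intro w hw
      by_contra hwn
      have hwgt : c < gmap u w := by
        rw [hHm, Set.mem_setOf_eq, not_le] at hwn; exact hwn
      have hUopen : IsOpen (interior K ∩ {z : V | c < gmap u z}) :=
        isOpen_interior.inter (isOpen_lt continuous_const hgc)
      have hUpos := hUopen.measure_pos volume ⟨w, hw, hwgt⟩
      have hUsub : interior K ∩ {z : V | c < gmap u z} ⊆ K ∩ Hp := by
        rintro z ⟨hz1, hz2⟩; exact ⟨interior_subset hz1, show c ≤ gmap u z from le_of_lt hz2⟩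
      have hle := measure_mono (μ := volume) hUsub
      rw [← hA, hA0] at hle
      exact absurd (le_zero_iff.1 hle) hUpos.ne'
    have hKHm : K ⊆ Hm := hdegen Hm hHmcl hIntHm
    have hKeqB : K ∩ Hm = K := Set.inter_eq_self_of_subset_left hKHm
    have hBK : B = volume K := by rw [hB, hKeqB]
    have hd2ne : d₂ ≠ 0 := by
      intro h20
      rw [harea', h40, h20] at hKpos; simp at hKpos
    have hT2int : (interior T2).Nonempty := by
      apply tri_interior_nonempty
      rw [detv_eq_gmap, ← hu, ← hd₂]; exact hd2ne
    have hvolK : volume K = volume T2 := by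
      rw [hvolT2]
      have hz : (volume K).toReal = (1/2) * (-d₂) := by rw [← hBK, hBeq]
      rw [← hz, ENNReal.ofReal_toReal hKfin]
    have hKT2 : K ⊆ T2 := subset_of_measure_le hT2cl hT2K hconv hKfin hT2int hvolK.le
    exact Set.Subset.antisymm (hKT2.trans hT2Q) hQK
  · by_cases h20 : d₂ = 0
    · have hB0 : B = 0 := by
        have hz : B.toReal = 0 := by rw [hBeq, h20]; ring
        exact (ENNReal.toReal_eq_zero_iff _).1 hz |>.resolve_right hBfin
      have hIntHp : interior K ⊆ Hp := by
        intro w hw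
        by_contra hwn
        have hwgt : gmap u w < c := by
          rw [hHp, Set.mem_setOf_eq, not_le] at hwn; exact hwn
        have hUopen : IsOpen (interior K ∩ {z : V | gmap u z < c}) :=
          isOpen_interior.inter (isOpen_lt hgc continuous_const)
        have hUpos := hUopen.measure_pos volume ⟨w, hw, hwgt⟩
        have hUsub : interior K ∩ {z : V | gmap u z < c} ⊆ K ∩ Hm := by
          rintro z ⟨hz1, hz2⟩; exact ⟨interior_subset hz1, show gmap u z ≤ c from le_of_lt hz2⟩
        have hle := measure_mono (μ := volume) hUsub
        rw [← hB, hB0] at hle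
        exact absurd (le_zero_iff.1 hle) hUpos.ne'
      have hKHp : K ⊆ Hp := hdegen Hp hHpcl hIntHp
      have hKeqA : K ∩ Hp = K := Set.inter_eq_self_of_subset_left hKHp
      have hAK : A = volume K := by rw [hA, hKeqA]
      have hT4int : (interior T4).Nonempty := by
        apply tri_interior_nonempty
        rw [detv_eq_gmap, ← hu, ← hd₄]; exact h40
      have hvolK : volume K = volume T4 := by
        rw [hvolT4]
        have hz : (volume K).toReal = (1/2) * d₄ := by rw [← hAK, hAeq]
        rw [← hz, ENNReal.ofReal_toReal hKfin]
      have hKT4 : K ⊆ T4 := subset_of_measure_le hT4cl hT4K hconv hKfin hT4int hvolK.le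
      exact Set.Subset.antisymm (hKT4.trans hT4Q) hQK
    · have hT4int : (interior T4).Nonempty := by
        apply tri_interior_nonempty
        rw [detv_eq_gmap, ← hu, ← hd₄]; exact h40
      have hT2int : (interior T2).Nonempty := by
        apply tri_interior_nonempty
        rw [detv_eq_gmap, ← hu, ← hd₂]; exact h20
      have hvA : A ≤ volume T4 := by
        rw [hvolT4, ← hAeq, ENNReal.ofReal_toReal hAfin]
      have hvB : B ≤ volume T2 := by
        rw [hvolT2, ← hBeq, ENNReal.ofReal_toReal hBfin]
      have hKpT4 : K ∩ Hp ⊆ T4 :=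
        subset_of_measure_le hT4cl hT4sub (hconv.inter hHpconv) hAfin hT4int hvA
      have hKmT2 : K ∩ Hm ⊆ T2 :=
        subset_of_measure_le hT2cl hT2sub (hconv.inter hHmconv) hBfin hT2int hvB
      apply Set.Subset.antisymm _ hQK
      rw [hcover]
      exact Set.union_subset (hKpT4.trans hT4Q) (hKmT2.trans hT2Q)
end Stmt8Aux

open Stmt8Aux in
theorem stmt8 (K : Set (EuclideanSpace ℝ (Fin 2)))
    (hconv : Convex ℝ K) (hcomp : IsCompact K) (hint : (interior K).Nonempty)
    (p₁ p₂ p₃ p₄ : EuclideanSpace ℝ (Fin 2))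
    (h₁ : p₁ ∈ K) (h₂ : p₂ ∈ K) (h₃ : p₃ ∈ K) (h₄ : p₄ ∈ K)
    (harea : (volume K).toReal =
      (1 / 2) * |(p₃ 0 - p₁ 0) * (p₄ 1 - p₂ 1) - (p₃ 1 - p₁ 1) * (p₄ 0 - p₂ 0)|) :
    K = convexHull ℝ {p₁, p₂, p₃, p₄} := by
  set u : EuclideanSpace ℝ (Fin 2) := p₃ - p₁ with hu
  set d₄ : ℝ := gmap u (p₄ - p₁) with hd₄
  set d₂ : ℝ := gmap u (p₂ - p₁) with hd₂
  have harea' : (volume K).toReal = (1/2) * |d₄ - d₂| := by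
    rw [harea]
    congr 2
    rw [hd₄, hd₂, gmap_apply, gmap_apply]
    simp only [hu, PiLp.sub_apply]
    ring
  have hbound : ∀ x : EuclideanSpace ℝ (Fin 2), x ∈ K →
      (1/2) * |gmap u (x - p₁)| ≤ (volume K).toReal := by
    intro x hx
    have hsub : convexHull ℝ {p₁, p₃, x} ⊆ K := by
      apply convexHull_min _ hconv
      rintro z (rfl | rfl | rfl)
      exacts [h₁, h₃, hx]
    have h := measure_mono (μ := volume) hsub
    rw [tri_vol] at h
    have h2 := ENNReal.toReal_mono hcomp.measure_lt_top.ne h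
    rwa [ENNReal.toReal_ofReal (by positivity), detv_eq_gmap, ← hu] at h2
  have hb4 : (1/2) * |d₄| ≤ (volume K).toReal := by rw [hd₄]; exact hbound p₄ h₄
  have hb2 : (1/2) * |d₂| ≤ (volume K).toReal := by rw [hd₂]; exact hbound p₂ h₂
  have hswap : ∀ _ : (d₄ ≤ 0 ∧ 0 ≤ d₂), K = convexHull ℝ {p₁, p₂, p₃, p₄} := by
    rintro ⟨hs4, hs2⟩
    have hres := main_aux K hconv hcomp hint p₁ p₄ p₃ p₂ h₁ h₄ h₃ h₂ hs4 hs2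
      (by rw [harea', abs_sub_comm])
    rw [hres]
    congr 1
    ext z
    simp only [Set.mem_insert_iff, Set.mem_singleton_iff]
    tauto
  rcases le_or_gt d₂ 0 with h2 | h2
  · rcases le_or_gt 0 d₄ with h4 | h4
    · exact main_aux K hconv hcomp hint p₁ p₂ p₃ p₄ h₁ h₂ h₃ h₄ h2 h4 harea'
    · rcases eq_or_lt_of_le h2 with h2e | h2lt
      · exact hswap ⟨h4.le, h2e.ge⟩
      · exfalso
        have e2 : |d₂| = -d₂ := abs_of_neg h2lt
        have e4 : |d₄| = -d₄ := abs_of_neg h4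
        rcases abs_cases (d₄ - d₂) with ⟨he, _⟩ | ⟨he, _⟩ <;>
          rw [he] at harea' <;> rw [e2] at hb2 <;> rw [e4] at hb4 <;> linarith
  · rcases le_or_gt d₄ 0 with h4 | h4
    · exact hswap ⟨h4, h2.le⟩
    · exfalso
      have e2 : |d₂| = d₂ := abs_of_pos h2
      have e4 : |d₄| = d₄ := abs_of_pos h4
      rcases abs_cases (d₄ - d₂) with ⟨he, _⟩ | ⟨he, _⟩ <;>
        rw [he] at harea' <;> rw [e2] at hb2 <;> rw [e4] at hb4 <;> linarith
end

section
/- For every centrally symmetric convex body L in ℝ² and every nonzero direction v, there exists an affine regular hexagon inscribed in L (i.e., six points A₁,…,A₆ ∈ ∂L that are the image of the vertices of a regular hexagon under an invertible affine map) such that the side A₁A₂ is parallel to v. -/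
open MeasureTheory Pointwise

theorem stmt9 (L : Set (EuclideanSpace ℝ (Fin 2)))
    (hconv : Convex ℝ L) (hcomp : IsCompact L) (hint : (interior L).Nonempty)
    (hsymm : L = -L) (v : EuclideanSpace ℝ (Fin 2)) (hv : v ≠ 0) :
    ∃ w₁ w₂ : EuclideanSpace ℝ (Fin 2), LinearIndependent ℝ ![w₁, w₂] ∧
      w₁ ∈ frontier L ∧ -w₁ ∈ frontier L ∧
      w₂ ∈ frontier L ∧ -w₂ ∈ frontier L ∧
      w₁ + w₂ ∈ frontier L ∧ -(w₁ + w₂) ∈ frontier L ∧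
      ∃ c : ℝ, c ≠ 0 ∧ w₂ = c • v := by
  classical
  -- 0 is in the interior of L
  obtain ⟨x₀, hx₀⟩ := hint
  have hx₀' : -x₀ ∈ interior L := by
    rw [hsymm]
    have hLpre : (-L : Set (EuclideanSpace ℝ (Fin 2))) =
        (Homeomorph.neg (EuclideanSpace ℝ (Fin 2))) ⁻¹' L := by
      ext x; simp [Set.mem_neg]
    rw [hLpre, ← Homeomorph.preimage_interior]
    simpa using hx₀
  have h0 : (0 : EuclideanSpace ℝ (Fin 2)) ∈ interior L := by
    have := hconv.interior hx₀ hx₀' (by norm_num : (0:ℝ) ≤ 1/2)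
      (by norm_num : (0:ℝ) ≤ 1/2) (by norm_num)
    simpa [smul_neg] using this
  have hnhds : L ∈ nhds (0 : EuclideanSpace ℝ (Fin 2)) :=
    mem_interior_iff_mem_nhds.mp h0
  have habs : Absorbent ℝ L := absorbent_nhds_zero hnhds
  have hbdd : Bornology.IsVonNBounded ℝ L :=
    NormedSpace.isVonNBounded_of_isBounded ℝ hcomp.isBounded
  have hsym' : ∀ x ∈ L, -x ∈ L := by
    intro x hx
    rw [hsymm]
    exact Set.neg_mem_neg.mpr hx
  have gfront : ∀ x, gauge L x = 1 ↔ x ∈ frontier L := fun x =>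
    gauge_eq_one_iff_mem_frontier hconv hnhds
  have gneg : ∀ x, gauge L (-x) = gauge L x := gauge_neg hsym'
  have gpos : ∀ x : EuclideanSpace ℝ (Fin 2), x ≠ 0 → 0 < gauge L x := fun x hx =>
    (gauge_pos habs hbdd).mpr hx
  have gcont : Continuous (gauge L) := continuous_gauge hconv hnhds
  -- w₂ : v scaled to the boundary
  have hgv : 0 < gauge L v := gpos v hv
  set w₂ : EuclideanSpace ℝ (Fin 2) := (gauge L v)⁻¹ • v with hw₂def
  have hw₂1 : gauge L w₂ = 1 := by
    rw [hw₂def, gauge_smul_of_nonneg (inv_nonneg.mpr hgv.le), smul_eq_mul,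
      inv_mul_cancel₀ hgv.ne']
  have hw₂0 : w₂ ≠ 0 := by
    intro h
    rw [h, gauge_zero] at hw₂1
    norm_num at hw₂1
  -- pick b outside the span of w₂
  have hspan_ne : (Submodule.span ℝ ({w₂} : Set (EuclideanSpace ℝ (Fin 2)))) ≠ ⊤ := by
    intro h
    have h1 : Module.finrank ℝ (Submodule.span ℝ ({w₂} : Set (EuclideanSpace ℝ (Fin 2)))) = 1 :=
      finrank_span_singleton hw₂0
    rw [h] at h1
    rw [finrank_top] at h1
    rw [finrank_euclideanSpace_fin] at h1
    norm_num at h1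
  obtain ⟨b, hb⟩ : ∃ b : EuclideanSpace ℝ (Fin 2),
      b ∉ Submodule.span ℝ ({w₂} : Set (EuclideanSpace ℝ (Fin 2))) := by
    by_contra h
    push_neg at h
    exact hspan_ne (Submodule.eq_top_iff'.mpr h)
  -- a path on the boundary from w₂ to -w₂
  set d : ℝ → EuclideanSpace ℝ (Fin 2) := fun θ => Real.cos θ • w₂ + Real.sin θ • b with hddef
  have hd0 : ∀ θ, d θ ≠ 0 := by
    intro θ h
    by_cases hs : Real.sin θ = 0
    · have hc : Real.cos θ ≠ 0 := by
        intro hc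
        have := Real.sin_sq_add_cos_sq θ
        rw [hs, hc] at this
        norm_num at this
      have h2 : Real.cos θ • w₂ = 0 := by simpa [hddef, hs] using h
      exact hw₂0 ((smul_eq_zero.mp h2).resolve_left hc)
    · apply hb
      have h1 : Real.sin θ • b = -(Real.cos θ • w₂) :=
        eq_neg_of_add_eq_zero_left (by simpa [hddef, add_comm] using h)
      have h2 : b = ((Real.sin θ)⁻¹ * (-Real.cos θ)) • w₂ := by
        calc b = (Real.sin θ)⁻¹ • (Real.sin θ • b) := (inv_smul_smul₀ hs b).symm
          _ = (Real.sin θ)⁻¹ • (-(Real.cos θ • w₂)) := by rw [h1]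
          _ = ((Real.sin θ)⁻¹ * (-Real.cos θ)) • w₂ := by
              rw [smul_neg, smul_smul]
              module
      rw [h2]
      exact Submodule.smul_mem _ _ (Submodule.mem_span_singleton_self w₂)
  set p : ℝ → EuclideanSpace ℝ (Fin 2) := fun θ => (gauge L (d θ))⁻¹ • d θ with hpdef
  have hp1 : ∀ θ, gauge L (p θ) = 1 := by
    intro θ
    rw [hpdef]
    simp only
    rw [gauge_smul_of_nonneg (inv_nonneg.mpr (gpos _ (hd0 θ)).le), smul_eq_mul,
      inv_mul_cancel₀ (gpos _ (hd0 θ)).ne']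
  set f : ℝ → ℝ := fun θ => gauge L (p θ + w₂) with hfdef
  have hfc : Continuous f := by
    have hdc : Continuous d := by
      apply Continuous.add
      · exact (Real.continuous_cos.smul continuous_const)
      · exact (Real.continuous_sin.smul continuous_const)
    have hinv : Continuous fun θ => (gauge L (d θ))⁻¹ :=
      (gcont.comp hdc).inv₀ fun θ => (gpos _ (hd0 θ)).ne'
    exact gcont.comp ((hinv.smul hdc).add continuous_const)
  have hdzero : d 0 = w₂ := by simp [hddef]
  have hdpi : d Real.pi = -w₂ := by simp [hddef]
  have hf0 : f 0 = 2 := by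
    have hp0 : p 0 = w₂ := by rw [hpdef]; simp only; rw [hdzero, hw₂1]; simp
    rw [hfdef]
    simp only
    rw [hp0, ← two_smul ℝ w₂, gauge_smul_of_nonneg (by norm_num : (0:ℝ) ≤ 2), smul_eq_mul,
      hw₂1, mul_one]
  have hfpi : f Real.pi = 0 := by
    have hgneg : gauge L (-w₂) = 1 := by rw [gneg, hw₂1]
    have hppi : p Real.pi = -w₂ := by rw [hpdef]; simp only; rw [hdpi, hgneg]; simp
    rw [hfdef]
    simp only
    rw [hppi, neg_add_cancel, gauge_zero]
  -- intermediate value theorem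
  have hmem : (1 : ℝ) ∈ Set.Icc (f Real.pi) (f 0) := by
    rw [hf0, hfpi]; constructor <;> norm_num
  obtain ⟨θ, _, hfθ⟩ := intermediate_value_Icc' Real.pi_pos.le hfc.continuousOn hmem
  set w₁ : EuclideanSpace ℝ (Fin 2) := p θ with hw₁def
  have hw₁1 : gauge L w₁ = 1 := hp1 θ
  have hsum : gauge L (w₁ + w₂) = 1 := hfθ
  refine ⟨w₁, w₂, ?_, (gfront _).mp hw₁1, (gfront _).mp (by rw [gneg]; exact hw₁1),
    (gfront _).mp hw₂1, (gfront _).mp (by rw [gneg]; exact hw₂1),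
    (gfront _).mp hsum, (gfront _).mp (by rw [gneg]; exact hsum),
    (gauge L v)⁻¹, inv_ne_zero hgv.ne', rfl⟩
  -- linear independence
  rw [LinearIndependent.pair_iff]
  intro s t hst
  have hs : s = 0 := by
    by_contra hs
    have hst' : s • w₁ = -(t • w₂) := eq_neg_of_add_eq_zero_left hst
    have hw : w₁ = (-t / s) • w₂ := by
      calc w₁ = s⁻¹ • (s • w₁) := (inv_smul_smul₀ hs w₁).symm
        _ = s⁻¹ • (-(t • w₂)) := by rw [hst']
        _ = (-t / s) • w₂ := by rw [smul_neg, smul_smul]; module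
    set c : ℝ := -t / s with hcdef
    have hgc : gauge L w₁ = |c| := by
      rcases le_or_gt 0 c with hc | hc
      · rw [hw, gauge_smul_of_nonneg hc, smul_eq_mul, hw₂1, mul_one, abs_of_nonneg hc]
      · have h1 : c • w₂ = -((-c) • w₂) := by module
        rw [hw, h1, gneg, gauge_smul_of_nonneg (neg_nonneg.mpr hc.le), smul_eq_mul, hw₂1,
          mul_one, abs_of_neg hc]
    have habs1 : |c| = 1 := by rw [← hgc, hw₁1]
    rcases (abs_eq (by norm_num : (0:ℝ) ≤ 1)).mp habs1 with h1 | h1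
    · rw [h1, one_smul] at hw
      have h2 : gauge L (w₁ + w₂) = 2 := by
        rw [hw, ← two_smul ℝ w₂, gauge_smul_of_nonneg (by norm_num : (0:ℝ) ≤ 2), smul_eq_mul,
          hw₂1, mul_one]
      rw [hsum] at h2
      norm_num at h2
    · rw [h1] at hw
      have h2 : w₁ + w₂ = 0 := by rw [hw]; module
      rw [h2, gauge_zero] at hsum
      norm_num at hsum
  refine ⟨hs, ?_⟩
  rw [hs, zero_smul, zero_add] at hst
  exact (smul_eq_zero.mp hst).resolve_right hw₂0
end

section
/- For the regular simplex Δₙ in ℝⁿ, one has |Δₙ|·|(Δₙ − Δₙ)°| = (n+1)/n!. -/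
open MeasureTheory Pointwise
lemma slice_vol {N : ℕ} (i : Fin (N+1)) (S : Set (Fin (N+1) → ℝ)) (hS : MeasurableSet S) :
    volume S = ∫⁻ t : ℝ, volume {y : Fin N → ℝ | i.insertNth t y ∈ S} := by
  have h := measurePreserving_piFinSuccAbove (fun _ : Fin (N+1) => (volume : Measure ℝ)) i
  set e := MeasurableEquiv.piFinSuccAbove (fun _ : Fin (N+1) => ℝ) i with he
  have h' := MeasurePreserving.symm e h
  have h2 : volume S = ((volume : Measure ℝ).prod (Measure.pi fun _ => volume))
      (e.symm ⁻¹' S) := by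
    rw [h'.measure_preimage hS.nullMeasurableSet]
    rfl
  rw [h2, Measure.prod_apply (e.symm.measurable hS)]
  congr 1

def corner (N : ℕ) (c : ℝ) : Set (Fin N → ℝ) := {x | (∀ i, 0 ≤ x i) ∧ ∑ i, x i ≤ c}

lemma corner_measurable (N : ℕ) (c : ℝ) : MeasurableSet (corner N c) := by
  have h1 : MeasurableSet {x : Fin N → ℝ | ∀ i, 0 ≤ x i} := by
    rw [Set.setOf_forall]
    exact MeasurableSet.iInter fun i => measurableSet_le measurable_const (measurable_pi_apply i)
  have h2 : MeasurableSet {x : Fin N → ℝ | ∑ i, x i ≤ c} :=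
    measurableSet_le (Finset.measurable_sum _ fun i _ => measurable_pi_apply i) measurable_const
  exact (h1.inter h2 : _)

lemma vol_corner : ∀ (N : ℕ) (c : ℝ), 0 ≤ c →
    volume (corner N c) = ENNReal.ofReal (c ^ N / N.factorial) := by
  intro N
  induction N with
  | zero =>
    intro c hc
    have : corner 0 c = Set.univ := by
      ext x
      simp [corner, hc]
    rw [this, volume_pi, Measure.pi_univ]
    simp
  | succ N ih =>
    intro c hc
    rw [slice_vol 0 _ (corner_measurable _ _)]
    have hfun : (fun t : ℝ => volume {y : Fin N → ℝ | Fin.insertNth 0 t y ∈ corner (N+1) c})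
        = Set.indicator (Set.Icc 0 c) (fun t => ENNReal.ofReal ((c - t)^N / N.factorial)) := by
      funext t
      by_cases ht : t ∈ Set.Icc 0 c
      · rw [Set.indicator_of_mem ht]
        have hset : {y : Fin N → ℝ | Fin.insertNth 0 t y ∈ corner (N+1) c}
            = corner N (c - t) := by
          ext y
          simp only [corner, Set.mem_setOf_eq, Fin.insertNth_zero', Fin.sum_cons,
            Fin.forall_fin_succ, Fin.cons_zero, Fin.cons_succ]
          constructor
          · rintro ⟨⟨_, h1⟩, h2⟩; exact ⟨h1, by linarith⟩
          · rintro ⟨h1, h2⟩; exact ⟨⟨ht.1, h1⟩, by linarith⟩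
        rw [hset, ih (c - t) (by linarith [ht.2])]
      · rw [Set.indicator_of_notMem ht]
        have hset : {y : Fin N → ℝ | Fin.insertNth 0 t y ∈ corner (N+1) c} = ∅ := by
          ext y
          simp only [corner, Set.mem_setOf_eq, Fin.insertNth_zero', Fin.sum_cons,
            Fin.forall_fin_succ, Fin.cons_zero, Fin.cons_succ, Set.mem_empty_iff_false,
            iff_false, not_and]
          rw [Set.mem_Icc, not_and_or, not_le, not_le] at ht
          rintro ⟨h0, h1⟩
          have hs := Finset.sum_nonneg (fun i (_ : i ∈ Finset.univ) => h1 i)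
          rcases ht with ht | ht
          · linarith
          · intro h2; linarith
        rw [hset, measure_empty]
    rw [hfun, lintegral_indicator measurableSet_Icc]
    have hint : Integrable (fun t : ℝ => (c - t)^N / N.factorial)
        (volume.restrict (Set.Icc 0 c)) :=
      (((continuous_const.sub continuous_id).pow N).div_const _).integrableOn_Icc
    have hnn : 0 ≤ᵐ[volume.restrict (Set.Icc 0 c)] fun t : ℝ => (c - t)^N / N.factorial := by
      refine (ae_restrict_iff' measurableSet_Icc).2 (ae_of_all _ fun t ht => ?_)
      exact div_nonneg (pow_nonneg (by linarith [ht.2]) N) (Nat.cast_nonneg _)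
    rw [← MeasureTheory.ofReal_integral_eq_lintegral_ofReal hint hnn]
    congr 1
    rw [MeasureTheory.integral_Icc_eq_integral_Ioc, ← intervalIntegral.integral_of_le hc]
    have : ∀ t : ℝ, (c - t)^N / N.factorial = (c - t)^N * ((N.factorial : ℝ))⁻¹ := fun t => by
      rw [div_eq_mul_inv]
    simp_rw [this]
    rw [intervalIntegral.integral_mul_const]
    have hcomp : ∫ t in (0:ℝ)..c, (c - t)^N = ∫ t in (c - c)..(c - 0), t ^ N := by
      rw [← intervalIntegral.integral_comp_sub_left (fun s => s ^ N) c]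
    rw [hcomp]
    simp only [sub_self, sub_zero]
    rw [integral_pow]
    have hfac : (N.factorial : ℝ) ≠ 0 := Nat.cast_ne_zero.2 N.factorial_ne_zero
    rw [Nat.factorial_succ]
    push_cast
    field_simp
    simp
section part3

def cubeA (n : ℕ) : Set (Fin n → ℝ) := Set.pi Set.univ (fun _ => Set.Icc (0:ℝ) 1)

def Cj {n : ℕ} (j : Fin n) : Set (Fin n → ℝ) :=
  {x | -1 ≤ x j ∧ x j < 0 ∧ (∀ i, x j ≤ x i ∧ x i ≤ x j + 1) ∧ ∀ i, i < j → x j < x i}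

def Pset (n : ℕ) : Set (Fin n → ℝ) :=
  {x | (∀ i, -1 ≤ x i) ∧ (∀ i, x i ≤ 1) ∧ ∀ i j, x i - x j ≤ 1}

lemma Cj_measurable {n : ℕ} (j : Fin n) : MeasurableSet (Cj j) := by
  have m1 : Measurable fun x : Fin n → ℝ => x j := measurable_pi_apply j
  unfold Cj
  simp only [Set.setOf_and, Set.setOf_forall]
  refine ((measurableSet_le measurable_const m1).inter
    ((measurableSet_lt m1 measurable_const).inter (MeasurableSet.inter ?_ ?_)))
  · exact MeasurableSet.iInter fun i =>
      (measurableSet_le m1 (measurable_pi_apply i)).inter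
        (measurableSet_le (measurable_pi_apply i) (m1.add measurable_const))
  · exact MeasurableSet.iInter fun i => MeasurableSet.iInter fun _ =>
      measurableSet_lt m1 (measurable_pi_apply i)

lemma vol_Cj {N : ℕ} (j : Fin (N+1)) : volume (Cj j) = 1 := by
  rw [slice_vol j _ (Cj_measurable j)]
  have hfun : (fun t : ℝ => volume {y : Fin N → ℝ | j.insertNth t y ∈ Cj j}) =
      Set.indicator (Set.Ico (-1:ℝ) 0) (fun _ => 1) := by
    funext t
    by_cases ht : t ∈ Set.Ico (-1:ℝ) 0
    · rw [Set.indicator_of_mem ht]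
      have hset : {y : Fin N → ℝ | j.insertNth t y ∈ Cj j} =
          Set.pi Set.univ
            (fun k => if j.succAbove k < j then Set.Ioc t (t+1) else Set.Icc t (t+1)) := by
        ext y
        simp only [Cj, Set.mem_setOf_eq, Fin.insertNth_apply_same, Set.mem_pi, Set.mem_univ,
          true_implies]
        constructor
        · rintro ⟨-, -, h3, h4⟩ k
          have h3k := h3 (j.succAbove k)
          have h4k := h4 (j.succAbove k)
          rw [Fin.insertNth_apply_succAbove] at h3k
          by_cases hk : j.succAbove k < j
          · simp only [hk, if_true, Set.mem_Ioc]
            have := h4k hk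
            rw [Fin.insertNth_apply_succAbove] at this
            exact ⟨this, h3k.2⟩
          · simp only [hk, if_false, Set.mem_Icc]
            exact h3k
        · intro h
          refine ⟨ht.1, ht.2, fun i => ?_, fun i hij' => ?_⟩
          · by_cases hij : i = j
            · subst hij
              rw [Fin.insertNth_apply_same]
              constructor
              · exact le_refl t
              · linarith
            · obtain ⟨k, rfl⟩ := Fin.exists_succAbove_eq hij
              rw [Fin.insertNth_apply_succAbove]
              have := h k
              by_cases hk2 : j.succAbove k < j
              · simp only [hk2, if_true, Set.mem_Ioc] at this
                exact ⟨le_of_lt this.1, this.2⟩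
              · simp only [hk2, if_false, Set.mem_Icc] at this
                exact this
          · by_cases hij : i = j
            · exact absurd hij' (by simp [hij])
            · obtain ⟨k, rfl⟩ := Fin.exists_succAbove_eq hij
              rw [Fin.insertNth_apply_succAbove]
              have := h k
              simp only [hij', if_true, Set.mem_Ioc] at this
              exact this.1
      rw [hset, volume_pi_pi]
      have : ∀ k : Fin N, volume
          (if j.succAbove k < j then Set.Ioc t (t+1) else Set.Icc t (t+1)) = 1 := by
        intro k
        split
        · rw [Real.volume_Ioc]; norm_num
        · rw [Real.volume_Icc]; norm_num
      simp [this]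
    · rw [Set.indicator_of_notMem ht]
      have hset : {y : Fin N → ℝ | j.insertNth t y ∈ Cj j} = ∅ := by
        ext y
        simp only [Cj, Set.mem_setOf_eq, Fin.insertNth_apply_same, Set.mem_empty_iff_false,
          iff_false, not_and]
        intro h1 h2
        exact absurd (Set.mem_Ico.2 ⟨h1, h2⟩) ht
      rw [hset, measure_empty]
  rw [hfun, lintegral_indicator measurableSet_Ico]
  rw [setLIntegral_one, Real.volume_Ico]
  norm_num

lemma Pset_eq (n : ℕ) : Pset n = cubeA n ∪ ⋃ j, Cj j := by
  apply Set.Subset.antisymm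
  · rintro x ⟨h1, h2, h3⟩
    by_cases hA : ∀ i, 0 ≤ x i
    · exact Or.inl fun i _ => ⟨hA i, h2 i⟩
    · push_neg at hA
      obtain ⟨i₀, hi₀⟩ := hA
      set F := Finset.univ.filter (fun i : Fin n => ∀ k, x i ≤ x k) with hF
      have hFne : F.Nonempty := by
        obtain ⟨j₀, -, hj₀⟩ := Finset.exists_min_image Finset.univ x ⟨i₀, Finset.mem_univ _⟩
        exact ⟨j₀, Finset.mem_filter.2 ⟨Finset.mem_univ _, fun k => hj₀ k (Finset.mem_univ _)⟩⟩
      set j := F.min' hFne with hjdef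
      have hj : ∀ k, x j ≤ x k := (Finset.mem_filter.1 (F.min'_mem hFne)).2
      refine Or.inr (Set.mem_iUnion.2 ⟨j, h1 j, lt_of_le_of_lt (hj i₀) hi₀,
        fun i => ⟨hj i, by have := h3 i j; linarith⟩, fun i hij => ?_⟩)
      by_contra hcon
      push_neg at hcon
      have hiF : i ∈ F := Finset.mem_filter.2 ⟨Finset.mem_univ _,
        fun k => le_trans hcon (hj k)⟩
      exact absurd hij (not_lt.2 (F.min'_le i hiF))
  · apply Set.union_subset
    · intro x hx
      refine ⟨fun i => by linarith [(hx i (Set.mem_univ i)).1],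
        fun i => (hx i (Set.mem_univ i)).2, fun i k => ?_⟩
      have hi := hx i (Set.mem_univ i)
      have hk := hx k (Set.mem_univ k)
      simp only [Set.mem_Icc] at hi hk
      linarith
    · apply Set.iUnion_subset
      rintro j x ⟨h1, h2, h3, -⟩
      refine ⟨fun i => le_trans h1 (h3 i).1, fun i => by linarith [(h3 i).2],
        fun i k => by linarith [(h3 i).2, (h3 k).1]⟩

lemma vol_Pset (N : ℕ) : volume (Pset (N+1)) = (N + 1 : ENNReal) + 1 := by
  rw [Pset_eq]
  have hCmeas : ∀ j : Fin (N+1), MeasurableSet (Cj j) := Cj_measurable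
  have hdisj : Disjoint (cubeA (N+1)) (⋃ j, Cj j) := by
    rw [Set.disjoint_iUnion_right]
    intro j
    rw [Set.disjoint_left]
    rintro x hx ⟨-, h2, -, -⟩
    exact absurd (hx j (Set.mem_univ j)).1 (not_le.2 h2)
  have hpair : Pairwise (Function.onFun Disjoint fun j : Fin (N+1) => Cj j) := by
    intro j k hjk
    rw [Function.onFun, Set.disjoint_left]
    rintro x ⟨-, -, h3, h4⟩ ⟨-, -, h3', h4'⟩
    rcases lt_or_gt_of_ne hjk with h | h
    · exact absurd (h3 k).1 (not_le.2 (h4' j h))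
    · exact absurd (h3' j).1 (not_le.2 (h4 k h))
  rw [measure_union hdisj (MeasurableSet.iUnion hCmeas), measure_iUnion hpair hCmeas]
  have hcube : volume (cubeA (N+1)) = 1 := by
    rw [cubeA, volume_pi_pi]
    simp [Real.volume_Icc]
  simp only [vol_Cj, tsum_const, tsum_fintype, hcube]
  simp [add_comm]

end part3
section part4

variable {n : ℕ}

def cornerE (n : ℕ) : Set (EuclideanSpace ℝ (Fin n)) :=
  {x | (∀ i, 0 ≤ x i) ∧ ∑ i, x i ≤ 1}

def PsetE (n : ℕ) : Set (EuclideanSpace ℝ (Fin n)) :=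
  {x | (∀ i, -1 ≤ x i) ∧ (∀ i, x i ≤ 1) ∧ ∀ i j, x i - x j ≤ 1}

noncomputable def qstd (n : ℕ) : Fin (n+1) → EuclideanSpace ℝ (Fin n) :=
  Fin.cons 0 (fun i => EuclideanSpace.single i 1)

lemma sum_single_eq (x : EuclideanSpace ℝ (Fin n)) :
    ∑ i, x i • EuclideanSpace.single i (1:ℝ) = x := by
  have hb := (EuclideanSpace.basisFun (Fin n) ℝ).toBasis.sum_repr x
  simpa only [OrthonormalBasis.coe_toBasis_repr_apply, EuclideanSpace.basisFun_repr,
    OrthonormalBasis.coe_toBasis, EuclideanSpace.basisFun_apply] using hb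

lemma convex_cornerE : Convex ℝ (cornerE n) := by
  have h1 : Convex ℝ {x : EuclideanSpace ℝ (Fin n) | ∀ i, 0 ≤ x i} := by
    rw [Set.setOf_forall]
    exact convex_iInter fun i => convex_halfSpace_ge
      ⟨fun a b => rfl, fun c a => rfl⟩ 0
  have h2 : Convex ℝ {x : EuclideanSpace ℝ (Fin n) | ∑ i, x i ≤ 1} := by
    refine convex_halfSpace_le ⟨fun a b => ?_, fun c a => ?_⟩ 1
    · exact Finset.sum_add_distrib
    · simp only [PiLp.smul_apply, smul_eq_mul, Finset.mul_sum]
  exact h1.inter h2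

lemma hull_qstd : convexHull ℝ (Set.range (qstd n)) = cornerE n := by
  apply Set.Subset.antisymm
  · refine convexHull_min ?_ convex_cornerE
    rintro - ⟨a, rfl⟩
    refine Fin.cases ?_ (fun i => ?_) a
    · have h0 : qstd n 0 = 0 := by rw [qstd, Fin.cons_zero]
      rw [h0]
      refine ⟨fun i => le_refl 0, ?_⟩
      have : ∀ i : Fin n, (0 : EuclideanSpace ℝ (Fin n)) i = 0 := fun _ => rfl
      simp [this]
    · rw [qstd, Fin.cons_succ]
      constructor
      · intro k
        rw [EuclideanSpace.single_apply]
        split <;> norm_num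
      · have : ∀ j, EuclideanSpace.single i (1:ℝ) j = if j = i then (1:ℝ) else 0 :=
          fun j => EuclideanSpace.single_apply i 1 j
        rw [Finset.sum_congr rfl fun j _ => this j, Finset.sum_ite_eq' Finset.univ i
          (fun _ => (1:ℝ))]
        simp
  · rintro x ⟨hx1, hx2⟩
    set w : Fin (n+1) → ℝ := Fin.cons (1 - ∑ i, x i) (fun i => x i) with hw
    have hw0 : ∀ a, 0 ≤ w a := by
      refine fun a => Fin.cases ?_ (fun i => ?_) a
      · rw [hw, Fin.cons_zero]; linarith
      · rw [hw, Fin.cons_succ]; exact hx1 i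
    have hws : ∑ a, w a = 1 := by
      rw [hw, Fin.sum_univ_succ]
      simp
    have hcm : Finset.univ.centerMass w (qstd n) = x := by
      rw [Finset.centerMass, hws]
      simp only [inv_one, one_smul, Fin.sum_univ_succ, qstd, hw, Fin.cons_zero, Fin.cons_succ,
        smul_zero, zero_add]
      exact sum_single_eq x
    rw [← hcm]
    exact Finset.centerMass_mem_convexHull _ (fun a _ => hw0 a) (by rw [hws]; norm_num)
      (fun a _ => Set.mem_range_self a)

lemma polarSet_convexHull (s : Set (EuclideanSpace ℝ (Fin n))) :
    polarSet (convexHull ℝ s) = polarSet s := by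
  apply Set.Subset.antisymm
  · intro x hx y hy
    exact hx y (subset_convexHull ℝ s hy)
  · intro x hx y hy
    have hconv : Convex ℝ {v : EuclideanSpace ℝ (Fin n) | inner ℝ v x ≤ (1:ℝ)} :=
      convex_halfSpace_le ⟨fun a b => inner_add_left a b x, fun c a =>
        real_inner_smul_left a x c⟩ 1
    exact convexHull_min hx hconv hy

lemma polar_diff_eq : polarSet (cornerE n - cornerE n) = PsetE n := by
  rw [← hull_qstd, ← convexHull_sub, polarSet_convexHull]
  ext x
  have hinner : ∀ a : Fin (n+1), (inner ℝ (qstd n a) x : ℝ) = Fin.cons (α := fun _ => ℝ) 0 (fun i => x i) a := by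
    refine fun a => Fin.cases ?_ (fun i => ?_) a
    · rw [qstd, Fin.cons_zero, Fin.cons_zero]
      exact inner_zero_left x
    · rw [qstd, Fin.cons_succ, Fin.cons_succ]
      rw [EuclideanSpace.inner_single_left]
      simp
  have hmem : x ∈ polarSet (Set.range (qstd n) - Set.range (qstd n)) ↔
      ∀ a b : Fin (n+1), Fin.cons (α := fun _ => ℝ) 0 (fun i => x i) a
        - Fin.cons (α := fun _ => ℝ) 0 (fun i => x i) b ≤ 1 := by
    constructor
    · intro h a b
      have := h (qstd n a - qstd n b)
        ⟨qstd n a, Set.mem_range_self a, qstd n b, Set.mem_range_self b, rfl⟩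
      rwa [inner_sub_left, hinner, hinner] at this
    · rintro h y ⟨u, ⟨a, rfl⟩, v, ⟨b, rfl⟩, rfl⟩
      rw [inner_sub_left, hinner, hinner]
      exact h a b
  rw [hmem]
  constructor
  · intro h
    refine ⟨fun i => ?_, fun i => ?_, fun i j => ?_⟩
    · have := h 0 i.succ
      simp only [Fin.cons_zero, Fin.cons_succ] at this
      linarith
    · have := h i.succ 0
      simp only [Fin.cons_zero, Fin.cons_succ] at this
      linarith
    · have := h i.succ j.succ
      simpa only [Fin.cons_succ] using this
  · rintro ⟨h1, h2, h3⟩ a b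
    refine Fin.cases ?_ (fun i => ?_) a <;> [skip; skip] <;>
      refine Fin.cases ?_ (fun j => ?_) b
    · simp
    · simp only [Fin.cons_zero, Fin.cons_succ]
      linarith [h1 j]
    · simp only [Fin.cons_zero, Fin.cons_succ]
      linarith [h2 i]
    · simp only [Fin.cons_succ]
      exact h3 i j

lemma vol_cornerE (n : ℕ) : volume (cornerE n) = ENNReal.ofReal (1 / n.factorial) := by
  have h := (EuclideanSpace.volume_preserving_symm_measurableEquiv_toLp (Fin n)).measure_preimage
    (corner_measurable n 1).nullMeasurableSet
  have heq : (MeasurableEquiv.toLp 2 (Fin n → ℝ)).symm ⁻¹' (corner n 1) = cornerE n := rfl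
  rw [heq] at h
  rw [h, vol_corner n 1 zero_le_one, one_pow]

lemma vol_PsetE (N : ℕ) : volume (PsetE (N+1)) = ((N + 2 : ℕ) : ENNReal) := by
  have h := (EuclideanSpace.volume_preserving_symm_measurableEquiv_toLp (Fin (N+1))).measure_preimage
    (hs := ?_) (s := Pset (N+1))
  · have heq : (MeasurableEquiv.toLp 2 (Fin (N+1) → ℝ)).symm ⁻¹' (Pset (N+1)) = PsetE (N+1) := rfl
    rw [heq] at h
    rw [h, vol_Pset N]
    push_cast
    ring
  · rw [Pset_eq]
    exact (((MeasurableSet.univ_pi fun _ => measurableSet_Icc).union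
      (MeasurableSet.iUnion fun j => Cj_measurable j)) : MeasurableSet _).nullMeasurableSet

end part4
theorem stmt11 {n : ℕ} (hn : 0 < n) (p : Fin (n + 1) → EuclideanSpace ℝ (Fin n))
    (hind : AffineIndependent ℝ p)
    (Δ : Set (EuclideanSpace ℝ (Fin n))) (hΔ : Δ = convexHull ℝ (Set.range p)) :
    (volume Δ).toReal * (volume (polarSet (Δ - Δ))).toReal = (n + 1) / n.factorial := by
  classical
  obtain ⟨N, rfl⟩ : ∃ N, n = N + 1 := ⟨n - 1, (Nat.succ_pred_eq_of_pos hn).symm⟩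
  -- the linear map sending the standard simplex vertices to `p`
  have hli0 := (affineIndependent_iff_linearIndependent_vsub ℝ p 0).1 hind
  have hinj : Function.Injective (fun i : Fin (N+1) =>
      (⟨i.succ, Fin.succ_ne_zero i⟩ : {x : Fin (N+2) // x ≠ 0})) := by
    intro a b h
    exact Fin.succ_injective _ (congrArg Subtype.val h)
  have hli : LinearIndependent ℝ (fun i : Fin (N+1) => p i.succ - p 0) := by
    have h2 := hli0.comp _ hinj
    simpa [Function.comp_def, vsub_eq_sub] using h2
  have hcard : Fintype.card (Fin (N+1)) = Module.finrank ℝ (EuclideanSpace ℝ (Fin (N+1))) := by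
    simp [finrank_euclideanSpace_fin]
  set B : Module.Basis (Fin (N+1)) ℝ (EuclideanSpace ℝ (Fin (N+1))) :=
    basisOfLinearIndependentOfCardEqFinrank hli hcard with hB
  set b0 : Module.Basis (Fin (N+1)) ℝ (EuclideanSpace ℝ (Fin (N+1))) :=
    (EuclideanSpace.basisFun (Fin (N+1)) ℝ).toBasis with hb0
  set L : EuclideanSpace ℝ (Fin (N+1)) ≃ₗ[ℝ] EuclideanSpace ℝ (Fin (N+1)) :=
    b0.equiv B (Equiv.refl _) with hL
  set f : EuclideanSpace ℝ (Fin (N+1)) →ₗ[ℝ] EuclideanSpace ℝ (Fin (N+1)) :=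
    L.toLinearMap with hfdef
  have hdet : LinearMap.det f ≠ 0 := (LinearEquiv.isUnit_det' L).ne_zero
  have hfe : ∀ i, f (EuclideanSpace.single i 1) = p i.succ - p 0 := by
    intro i
    have h1 : b0 i = EuclideanSpace.single i 1 := by
      rw [hb0, OrthonormalBasis.coe_toBasis, EuclideanSpace.basisFun_apply]
    have h2 : f (b0 i) = B (Equiv.refl _ i) := Module.Basis.equiv_apply b0 i B (Equiv.refl _)
    rw [h1] at h2
    rw [h2, hB, coe_basisOfLinearIndependentOfCardEqFinrank]
    rfl
  have hpq : ∀ a, p a = p 0 + f (qstd (N+1) a) := by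
    intro a
    refine Fin.cases ?_ (fun i => ?_) a
    · rw [qstd, Fin.cons_zero, map_zero, add_zero]
    · rw [qstd, Fin.cons_succ, hfe, add_sub_cancel]
  have himg : ∀ s : Set (EuclideanSpace ℝ (Fin (N+1))),
      (fun y => p 0 + f y) '' s = (p 0) +ᵥ (f '' s) := by
    intro s
    ext z
    simp only [Set.mem_image, Set.mem_vadd_set, vadd_eq_add]
    constructor
    · rintro ⟨y, hy, rfl⟩; exact ⟨f y, ⟨y, hy, rfl⟩, rfl⟩
    · rintro ⟨w, ⟨y, hy, rfl⟩, rfl⟩; exact ⟨y, hy, rfl⟩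
  have hΔ2 : Δ = (p 0) +ᵥ (f '' cornerE (N+1)) := by
    have hr : Set.range p = (fun y => p 0 + f y) '' Set.range (qstd (N+1)) := by
      ext z
      simp only [Set.mem_range, Set.mem_image]
      constructor
      · rintro ⟨a, rfl⟩; exact ⟨qstd (N+1) a, ⟨a, rfl⟩, (hpq a).symm⟩
      · rintro ⟨y, ⟨a, rfl⟩, rfl⟩; exact ⟨a, hpq a⟩
    rw [hΔ, hr, himg, convexHull_vadd, ← LinearMap.image_convexHull, hull_qstd]
  have hvolΔ : volume Δ = ENNReal.ofReal |LinearMap.det f|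
      * ENNReal.ofReal (1 / (N+1).factorial) := by
    rw [hΔ2, measure_vadd, Measure.addHaar_image_linearMap, vol_cornerE]
  have hvadd_sub : ∀ (c : EuclideanSpace ℝ (Fin (N+1))) (A A' : Set (EuclideanSpace ℝ (Fin (N+1)))),
      (c +ᵥ A) - (c +ᵥ A') = A - A' := by
    intro c A A'
    ext z
    simp only [Set.mem_sub, Set.mem_vadd_set, vadd_eq_add]
    constructor
    · rintro ⟨u, ⟨a, ha, rfl⟩, w, ⟨b, hb, rfl⟩, rfl⟩
      exact ⟨a, ha, b, hb, by abel⟩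
    · rintro ⟨a, ha, b, hb, rfl⟩
      exact ⟨c + a, ⟨a, ha, rfl⟩, c + b, ⟨b, hb, rfl⟩, by abel⟩
  have hsub : Δ - Δ = f '' (cornerE (N+1) - cornerE (N+1)) := by
    rw [hΔ2, hvadd_sub]
    ext z
    simp only [Set.mem_sub, Set.mem_image]
    constructor
    · rintro ⟨u, ⟨a, ha, rfl⟩, w, ⟨b, hb, rfl⟩, rfl⟩
      exact ⟨a - b, ⟨a, ha, b, hb, rfl⟩, map_sub f a b⟩
    · rintro ⟨w, ⟨a, ha, b, hb, rfl⟩, rfl⟩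
      exact ⟨f a, ⟨a, ha, rfl⟩, f b, ⟨b, hb, rfl⟩, (map_sub f a b).symm⟩
  set g := LinearMap.adjoint f with hg
  have hpolar : polarSet (Δ - Δ) = g ⁻¹' (PsetE (N+1)) := by
    rw [hsub, ← polar_diff_eq]
    ext x
    simp only [polarSet, Set.mem_setOf_eq, Set.mem_preimage]
    constructor
    · intro h z hz
      have h2 := h (f z) (Set.mem_image_of_mem f hz)
      rwa [← LinearMap.adjoint_inner_right] at h2
    · rintro h y ⟨z, hz, rfl⟩
      have h2 := h z hz
      rwa [LinearMap.adjoint_inner_right] at h2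
  have hdetg : LinearMap.det g = LinearMap.det f := by
    have h1 := LinearMap.toMatrix_adjoint (𝕜 := ℝ)
      (v₁ := EuclideanSpace.basisFun (Fin (N+1)) ℝ)
      (v₂ := EuclideanSpace.basisFun (Fin (N+1)) ℝ) f
    have h2 : LinearMap.det g = (LinearMap.toMatrix b0 b0 g).det :=
      (LinearMap.det_toMatrix b0 g).symm
    rw [h2, hg, hb0, h1, Matrix.det_conjTranspose, star_trivial, LinearMap.det_toMatrix]
  have hdetg0 : LinearMap.det g ≠ 0 := by rw [hdetg]; exact hdet
  have hvolP : volume (polarSet (Δ - Δ)) = ENNReal.ofReal |(LinearMap.det f)⁻¹|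
      * ((N + 2 : ℕ) : ENNReal) := by
    rw [hpolar, Measure.addHaar_preimage_linearMap volume hdetg0, hdetg, vol_PsetE]
  rw [hvolΔ, hvolP, ENNReal.toReal_mul, ENNReal.toReal_mul,
    ENNReal.toReal_ofReal (abs_nonneg _), ENNReal.toReal_ofReal (abs_nonneg _),
    ENNReal.toReal_ofReal (by positivity), ENNReal.toReal_natCast, abs_inv]
  have habs : |LinearMap.det f| ≠ 0 := abs_ne_zero.2 hdet
  have hfac : (((N+1).factorial : ℝ)) ≠ 0 := Nat.cast_ne_zero.2 (Nat.factorial_ne_zero _)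
  push_cast
  field_simp
  ring
end

section
/- For every convex body K in ℝⁿ and every lattice Λ such that the lattice arrangement Λ + K is non-separable, the density |K|/det(Λ) is at least 2^{-n}·|K|·|(K − K)°|. -/
open MeasureTheory Pointwise

section aux
variable {n : ℕ}

lemma polar_convex (s : Set (EuclideanSpace ℝ (Fin n))) : Convex ℝ (polarSet s) := by
  have : polarSet s = ⋂ y ∈ s, {x | (inner ℝ y x : ℝ) ≤ 1} := by
    ext x; simp [polarSet]
  rw [this]
  exact convex_iInter fun y => convex_iInter fun _ =>
    convex_halfSpace_le ⟨fun a b => inner_add_right y a b, fun c a => real_inner_smul_right y a c⟩ 1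

lemma polar_closed (s : Set (EuclideanSpace ℝ (Fin n))) : IsClosed (polarSet s) := by
  have : polarSet s = ⋂ y ∈ s, {x | (inner ℝ y x : ℝ) ≤ 1} := by
    ext x; simp [polarSet]
  rw [this]
  exact isClosed_iInter fun y => isClosed_iInter fun _ =>
    isClosed_le (continuous_const.inner continuous_id) continuous_const

noncomputable def dualBasis' (B : Matrix (Fin n) (Fin n) ℝ) (hB : Invertible B) :
    Module.Basis (Fin n) ℝ (Fin n → ℝ) :=
  (Pi.basisFun ℝ (Fin n)).map (B.toLinearEquiv' hB)

noncomputable def dualBasis (B : Matrix (Fin n) (Fin n) ℝ) (hB : Invertible B) :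
    Module.Basis (Fin n) ℝ (EuclideanSpace ℝ (Fin n)) :=
  (dualBasis' B hB).map (WithLp.linearEquiv 2 ℝ (Fin n → ℝ)).symm

lemma dualBasis_apply (B : Matrix (Fin n) (Fin n) ℝ) (hB : Invertible B) (i j : Fin n) :
    (dualBasis B hB i : EuclideanSpace ℝ (Fin n)) j = B j i := by
  simp [dualBasis, dualBasis', Matrix.toLinearEquiv', Matrix.mulVec_single]

lemma dualBasis_volume (B : Matrix (Fin n) (Fin n) ℝ) (hB : Invertible B) :
    volume (ZSpan.fundamentalDomain (dualBasis B hB)) = ENNReal.ofReal |B.det| := by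
  have h1 : ZSpan.fundamentalDomain (dualBasis B hB) =
      (MeasurableEquiv.toLp 2 (Fin n → ℝ)).symm ⁻¹'
        (ZSpan.fundamentalDomain (dualBasis' B hB)) := by
    have h2 : ZSpan.fundamentalDomain ((dualBasis B hB).map (WithLp.linearEquiv 2 ℝ (Fin n → ℝ)))
        = (WithLp.linearEquiv 2 ℝ (Fin n → ℝ)) '' ZSpan.fundamentalDomain (dualBasis B hB) :=
      (ZSpan.map_fundamentalDomain _ _).symm
    have h3 : (dualBasis B hB).map (WithLp.linearEquiv 2 ℝ (Fin n → ℝ)) = dualBasis' B hB := by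
      ext i : 1
      simp [dualBasis]
    rw [← h3, h2]
    ext x
    simp
    exact ⟨fun h => ⟨x, h, rfl⟩, fun ⟨y, hy, hyx⟩ => WithLp.ofLp_injective 2 hyx ▸ hy⟩
  rw [h1, (EuclideanSpace.volume_preserving_symm_measurableEquiv_toLp (Fin n)).measure_preimage
    (ZSpan.fundamentalDomain_measurableSet _).nullMeasurableSet,
    ZSpan.volume_fundamentalDomain]
  have : Matrix.of ⇑(dualBasis' B hB) = B.transpose := by
    ext i j
    simp [dualBasis', Matrix.toLinearEquiv', Matrix.mulVec_single]
  rw [this, Matrix.det_transpose]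

end aux

theorem stmt13 {n : ℕ} (hn : 0 < n) (K : Set (EuclideanSpace ℝ (Fin n)))
    (hconv : Convex ℝ K) (hcomp : IsCompact K) (hint : (interior K).Nonempty)
    (A : Matrix (Fin n) (Fin n) ℝ) (hA : IsUnit A.det)
    (Λ : Set (EuclideanSpace ℝ (Fin n)))
    (hΛ : Λ = (fun v : EuclideanSpace ℝ (Fin n) =>
        (WithLp.toLp 2 (A.mulVec v) : EuclideanSpace ℝ (Fin n))) ''
        {v : EuclideanSpace ℝ (Fin n) | ∀ i, ∃ m : ℤ, v i = (m : ℝ)})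
    (hns : ∀ (w : EuclideanSpace ℝ (Fin n)) (c : ℝ), w ≠ 0 →
        ∃ x ∈ Λ, ∃ y ∈ K, inner ℝ w (x + y) = c) :
    (volume K).toReal / |A.det| ≥
      (volume K).toReal * (volume (polarSet (K - K))).toReal / 2 ^ n := by
  have hdet : A.det ≠ 0 := hA.ne_zero
  have habs : 0 < |A.det| := abs_pos.mpr hdet
  set B := A.transpose⁻¹ with hBdef
  have hAT : IsUnit A.transpose.det := by rwa [Matrix.det_transpose]
  have hBdet : B.det = (A.det)⁻¹ := by
    rw [hBdef, Matrix.det_nonsing_inv, Matrix.det_transpose, Ring.inverse_eq_inv']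
  have hBunit : IsUnit B.det := by
    rw [hBdet]; exact isUnit_iff_ne_zero.mpr (inv_ne_zero hdet)
  have hBinv : Invertible B := B.invertibleOfIsUnitDet hBunit
  have hATB : A.transpose * B = 1 := Matrix.mul_nonsing_inv _ hAT
  have hBTA : B.transpose * A = 1 := by
    have h := congrArg Matrix.transpose hATB
    rwa [Matrix.transpose_mul, Matrix.transpose_transpose, Matrix.transpose_one] at h
  set b := dualBasis B hBinv with hbdef
  set P := polarSet (K - K) with hPdef
  have hinner : ∀ w x' : EuclideanSpace ℝ (Fin n),
      (inner ℝ w x' : ℝ) = dotProduct (w : Fin n → ℝ) x' := fun w x' => by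
    simp [PiLp.inner_apply, RCLike.inner_apply, dotProduct, mul_comm]
  -- integrality of inner ℝ products with lattice points
  have key : ∀ w : EuclideanSpace ℝ (Fin n), w ∈ Submodule.span ℤ (Set.range b) →
      ∀ x' ∈ Λ, ∃ k : ℤ, (inner ℝ w x' : ℝ) = k := by
    intro w hw x' hx'
    rw [hΛ] at hx'
    obtain ⟨v, hv, rfl⟩ := hx'
    choose mv hmv using hv
    have hrep := fun i => ((b.mem_span_iff_repr_mem ℤ w).mp hw i)
    choose c hc using hrep
    refine ⟨∑ i, c i * mv i, ?_⟩
    have hbi : ∀ i, (inner ℝ (b i) (WithLp.toLp 2 (A.mulVec v) : EuclideanSpace ℝ (Fin n)) : ℝ) = mv i := by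
      intro i
      rw [hinner]
      have hcol : (b i : Fin n → ℝ) = fun j => B j i := funext fun j => dualBasis_apply B hBinv i j
      rw [hcol]
      calc dotProduct (fun j => B j i) (A.mulVec v)
          = dotProduct (A.vecMul fun j => B j i) v := Matrix.dotProduct_mulVec _ _ _
        _ = (mv i : ℝ) := by
            have hvec : (A.vecMul fun j => B j i) = fun l => (B.transpose * A) i l := by
              funext l
              simp [Matrix.vecMul, Matrix.mul_apply, dotProduct, Matrix.transpose_apply]
            rw [hvec, hBTA]
            simp [Matrix.one_apply, dotProduct, ← hmv]
    have hw' : w = ∑ i, b.repr w i • b i := (b.sum_repr w).symm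
    calc (inner ℝ w (WithLp.toLp 2 (A.mulVec v) : EuclideanSpace ℝ (Fin n)) : ℝ)
        = ∑ i, (b.repr w i) * inner ℝ (b i) (WithLp.toLp 2 (A.mulVec v) : EuclideanSpace ℝ (Fin n)) := by
          conv_lhs => rw [hw']
          rw [sum_inner]
          exact Finset.sum_congr rfl fun i _ => real_inner_smul_left _ _ _
      _ = ∑ i, ((c i : ℝ) * (mv i : ℝ)) := by
          refine Finset.sum_congr rfl fun i _ => ?_
          rw [hbi i, ← hc i]; norm_num
      _ = ((∑ i, c i * mv i : ℤ) : ℝ) := by push_cast; ring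
  -- properties of the polar set
  have hPconv := polar_convex (K - K)
  have hPclosed := polar_closed (K - K)
  have hPsymm : ∀ z ∈ P, -z ∈ P := by
    intro z hz y hy
    obtain ⟨y1, hy1, y2, hy2, rfl⟩ := hy
    have : y2 - y1 ∈ K - K := Set.sub_mem_sub hy2 hy1
    have h2 := hz _ this
    rw [inner_sub_left] at h2 ⊢
    rw [inner_neg_right, inner_neg_right]
    linarith
  have hintsymm : ∀ z ∈ interior P, -z ∈ interior P := by
    have hPeq : -P = P := by
      ext z
      simp only [Set.mem_neg]
      exact ⟨fun h => by simpa using hPsymm _ h, fun h => hPsymm _ h⟩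
    have hsub : -interior P ⊆ interior P := by
      refine interior_maximal ?_ isOpen_interior.neg
      intro u hu
      have h1 : -u ∈ interior P := Set.mem_neg.mp hu
      have h2 := hPsymm _ (interior_subset h1)
      rwa [neg_neg] at h2
    intro z hz
    exact hsub (Set.neg_mem_neg.mpr hz)
  -- the volume bound via Minkowski
  have hPbound : volume P ≤ ENNReal.ofReal |A.det|⁻¹ * 2 ^ n := by
    by_contra hcon
    push_neg at hcon
    have hfr : volume (frontier P) = 0 := hPconv.addHaar_frontier volume
    have hint_vol : volume (interior P) = volume P := by
      refine le_antisymm (measure_mono interior_subset) ?_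
      calc volume P ≤ volume (interior P ∪ frontier P) := by
            refine measure_mono ?_
            rw [← closure_eq_interior_union_frontier]
            exact subset_closure
        _ ≤ volume (interior P) + volume (frontier P) := measure_union_le _ _
        _ = volume (interior P) := by rw [hfr, add_zero]
    haveI : Countable (Submodule.span ℤ (Set.range b)).toAddSubgroup :=
      inferInstanceAs (Countable (Submodule.span ℤ (Set.range b)))
    have fund := ZSpan.isAddFundamentalDomain' b volume
    have hlt : volume (ZSpan.fundamentalDomain b) *
        2 ^ (Module.finrank ℝ (EuclideanSpace ℝ (Fin n))) < volume (interior P) := by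
      rw [hbdef, dualBasis_volume, finrank_euclideanSpace_fin, hint_vol, hBdet, abs_inv]
      exact hcon
    obtain ⟨x, hx0, hxP⟩ := exists_ne_zero_mem_lattice_of_measure_mul_two_pow_lt_measure
      fund hintsymm hPconv.interior hlt
    set w := (x : EuclideanSpace ℝ (Fin n)) with hwdef
    have hw0 : w ≠ 0 := fun h => hx0 (ZeroMemClass.coe_eq_zero.mp h)
    have hwspan : w ∈ Submodule.span ℤ (Set.range b) := x.2
    -- get a strict bound on the width
    obtain ⟨ε, hε, hball⟩ := Metric.isOpen_iff.mp isOpen_interior w hxP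
    set δ := ε / (2 * ‖w‖ + 1) with hδdef
    have hδ : 0 < δ := div_pos hε (by positivity)
    have h1δ : (0:ℝ) < 1 + δ := by linarith
    have hmem : (1 + δ) • w ∈ P := by
      refine interior_subset (hball ?_)
      rw [Metric.mem_ball, dist_eq_norm]
      have h2 : (1+δ)•w - w = δ • w := by
        rw [add_smul, one_smul, add_sub_cancel_left]
      rw [h2, norm_smul, Real.norm_eq_abs, abs_of_pos hδ, hδdef]
      rw [div_mul_eq_mul_div, div_lt_iff₀ (by positivity)]
      nlinarith [norm_nonneg w]
    set ρ := 1/(1+δ) with hρdef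
    have hρ : ρ < 1 := by
      rw [hρdef, div_lt_one h1δ]; linarith
    have hub : ∀ y ∈ K - K, (inner ℝ y w : ℝ) ≤ ρ := by
      intro y hy
      have h1 := hmem y hy
      rw [real_inner_smul_right] at h1
      rw [hρdef, le_div_iff₀ h1δ, mul_comm]
      linarith
    -- min and max of the linear functional on K
    have hKne : K.Nonempty := ⟨hint.choose, interior_subset hint.choose_spec⟩
    have hcont : Continuous fun y : EuclideanSpace ℝ (Fin n) => (inner ℝ w y : ℝ) :=
      continuous_const.inner continuous_id
    obtain ⟨ymin, hyminK, hminOn⟩ := hcomp.exists_isMinOn hKne hcont.continuousOn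
    obtain ⟨ymax, hymaxK, hmaxOn⟩ := hcomp.exists_isMaxOn hKne hcont.continuousOn
    set a := (inner ℝ w ymin : ℝ) with hadef
    set bb := (inner ℝ w ymax : ℝ) with hbbdef
    have hab : bb - a ≤ ρ := by
      have hmem2 : ymax - ymin ∈ K - K := Set.sub_mem_sub hymaxK hyminK
      have h2 := hub _ hmem2
      have h3 : (inner ℝ (ymax - ymin) w : ℝ) = bb - a := by
        rw [inner_sub_left, real_inner_comm w ymax, real_inner_comm w ymin]
      linarith
    -- the contradiction
    obtain ⟨x', hx'Λ, y, hyK, hsum⟩ := hns w ((a + bb + 1)/2) hw0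
    obtain ⟨k, hk⟩ := key w hwspan x' hx'Λ
    have hsplit : (inner ℝ w (x' + y) : ℝ) = k + inner ℝ w y := by
      rw [inner_add_right, hk]
    rw [hsplit] at hsum
    have h5a : a ≤ (inner ℝ w y : ℝ) := isMinOn_iff.mp hminOn y hyK
    have h5b : (inner ℝ w y : ℝ) ≤ bb := isMaxOn_iff.mp hmaxOn y hyK
    have h6 : (k:ℝ) = (a+bb+1)/2 - inner ℝ w y := by linarith
    have h7 : (0:ℝ) < k := by rw [h6]; linarith
    have h8 : (k:ℝ) < 1 := by rw [h6]; linarith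
    have h9 : (0:ℤ) < k := by exact_mod_cast h7
    have h9' : (1:ℤ) ≤ k := h9
    have h10 : (1:ℝ) ≤ k := by exact_mod_cast h9'
    linarith
  -- conclude
  have h2n : (0:ℝ) < 2 ^ n := by positivity
  have hPle : (volume P).toReal ≤ |A.det|⁻¹ * 2 ^ n := by
    have hne : (ENNReal.ofReal |A.det|⁻¹ * 2 ^ n) ≠ ⊤ :=
      ENNReal.mul_ne_top ENNReal.ofReal_ne_top (ENNReal.pow_ne_top ENNReal.ofNat_ne_top)
    have h := ENNReal.toReal_mono hne hPbound
    rwa [ENNReal.toReal_mul, ENNReal.toReal_ofReal (by positivity), ENNReal.toReal_pow,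
      ENNReal.toReal_ofNat] at h
  rw [ge_iff_le]
  calc (volume K).toReal * (volume P).toReal / 2 ^ n
      ≤ (volume K).toReal * (|A.det|⁻¹ * 2 ^ n) / 2 ^ n := by
        gcongr
    _ = (volume K).toReal / |A.det| := by
        field_simp
end

section
/- Let K be a convex body in ℝ³ with tetrahedral symmetry and suppose a(1,1,1) ∈ ∂(K−K)° for a > 0. Then (1/(3a))·(1,1,1) ∈ ∂(K−K). -/
open MeasureTheory Pointwise

def g3 : Matrix (Fin 3) (Fin 3) ℝ := !![0,1,0;0,0,1;1,0,0]

lemma g3_mulVec (v : Fin 3 → ℝ) : g3.mulVec v = ![v 1, v 2, v 0] := by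
  funext i
  fin_cases i <;> simp [g3, Matrix.mulVec, dotProduct, Fin.sum_univ_three]

lemma g3_mem : g3 ∈ Matrix.specialOrthogonalGroup (Fin 3) ℝ := by
  rw [Matrix.mem_specialOrthogonalGroup_iff]
  constructor
  · rw [Matrix.mem_orthogonalGroup_iff]
    ext i j
    fin_cases i <;> fin_cases j <;>
      simp [g3, Matrix.mul_apply, Fin.sum_univ_three, Matrix.one_apply]
  · simp [g3, Matrix.det_fin_three]

lemma g3_lin : IsLinearMap ℝ (fun x : EuclideanSpace ℝ (Fin 3) =>
    (WithLp.toLp 2 (g3.mulVec x) : EuclideanSpace ℝ (Fin 3))) := by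
  constructor
  · intro x y; ext i; simp [Matrix.mulVec_add]
  · intro c x; ext i; simp [Matrix.mulVec_smul]

lemma g3_tetra : (fun x : EuclideanSpace ℝ (Fin 3) =>
    (WithLp.toLp 2 (g3.mulVec x) : EuclideanSpace ℝ (Fin 3))) '' tetra = tetra := by
  unfold tetra
  rw [g3_lin.image_convexHull]
  congr 1
  have h1 : (WithLp.toLp 2 (g3.mulVec (!₂[1,1,-1] : EuclideanSpace ℝ (Fin 3))) : EuclideanSpace ℝ (Fin 3)) = !₂[1,-1,1] := by
    rw [g3_mulVec]; norm_num; rfl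
  have h2 : (WithLp.toLp 2 (g3.mulVec (!₂[1,-1,1] : EuclideanSpace ℝ (Fin 3))) : EuclideanSpace ℝ (Fin 3)) = !₂[-1,1,1] := by
    rw [g3_mulVec]; norm_num; rfl
  have h3 : (WithLp.toLp 2 (g3.mulVec (!₂[-1,1,1] : EuclideanSpace ℝ (Fin 3))) : EuclideanSpace ℝ (Fin 3)) = !₂[1,1,-1] := by
    rw [g3_mulVec]; norm_num; rfl
  have h4 : (WithLp.toLp 2 (g3.mulVec (!₂[-1,-1,-1] : EuclideanSpace ℝ (Fin 3))) : EuclideanSpace ℝ (Fin 3)) = !₂[-1,-1,-1] := by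
    rw [g3_mulVec]; norm_num; rfl
  simp only [Set.image_insert_eq, Set.image_singleton, h1, h2, h3, h4]
  ext x
  simp only [Set.mem_insert_iff, Set.mem_singleton_iff]
  tauto

theorem stmt16 (K : Set (EuclideanSpace ℝ (Fin 3)))
    (hconv : Convex ℝ K) (hcomp : IsCompact K) (hint : (interior K).Nonempty)
    (hsym : hasTetraSymm K) (a : ℝ) (ha : 0 < a)
    (hfa : a • (!₂[1, 1, 1] : EuclideanSpace ℝ (Fin 3)) ∈ frontier (polarSet (K - K))) :
    (1 / (3 * a)) • (!₂[1, 1, 1] : EuclideanSpace ℝ (Fin 3)) ∈ frontier (K - K) := by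
  set u : EuclideanSpace ℝ (Fin 3) := a • !₂[1,1,1] with hu
  set x : EuclideanSpace ℝ (Fin 3) := (1 / (3 * a)) • !₂[1,1,1] with hx
  set D : Set (EuclideanSpace ℝ (Fin 3)) := K - K with hD
  obtain ⟨p, hp⟩ := hint
  have hpK : p ∈ K := interior_subset hp
  have h0D : (0 : EuclideanSpace ℝ (Fin 3)) ∈ D :=
    Set.mem_sub.mpr ⟨p, hpK, p, hpK, sub_self p⟩
  have hDcomp : IsCompact D := by
    rw [hD, sub_eq_add_neg]; exact hcomp.add hcomp.neg
  have hDconv : Convex ℝ D := hconv.sub hconv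
  have hDclosed : IsClosed D := hDcomp.isClosed
  -- polar is closed
  have hPclosed : IsClosed (polarSet D) := by
    have : polarSet D = ⋂ y ∈ D, {z : EuclideanSpace ℝ (Fin 3) | inner ℝ y z ≤ (1:ℝ)} := by
      ext z; simp [polarSet]
    rw [this]
    exact isClosed_biInter fun y _ =>
      isClosed_le (Continuous.inner continuous_const continuous_id) continuous_const
  rw [hPclosed.frontier_eq] at hfa
  have huP : u ∈ polarSet D := hfa.1
  have huNI : u ∉ interior (polarSet D) := hfa.2
  have hui : ∀ i : Fin 3, u i = a := by
    intro i; rw [hu]; fin_cases i <;> simp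
  have hxi : ∀ i : Fin 3, x i = 1 / (3 * a) := by
    intro i; rw [hx]; fin_cases i <;> simp
  -- inner products with u
  have hinner_u : ∀ v : EuclideanSpace ℝ (Fin 3),
      (inner ℝ v u : ℝ) = a * (v 0 + v 1 + v 2) := by
    intro v
    simp [PiLp.inner_apply, Fin.sum_univ_three, RCLike.inner_apply, hui]
    ring
  -- maximizer
  have hcont : Continuous fun y : EuclideanSpace ℝ (Fin 3) => (inner ℝ y u : ℝ) :=
    Continuous.inner continuous_id continuous_const
  obtain ⟨y₀, hy₀D, hy₀max⟩ := hDcomp.exists_isMaxOn ⟨0, h0D⟩ hcont.continuousOn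
  have hm1 : (inner ℝ y₀ u : ℝ) ≤ 1 := huP y₀ hy₀D
  -- the max equals 1
  have hmax : (inner ℝ y₀ u : ℝ) = 1 := by
    by_contra hne
    have hmlt : (inner ℝ y₀ u : ℝ) < 1 := lt_of_le_of_ne hm1 hne
    obtain ⟨R, hR⟩ := isBounded_iff_forall_norm_le.mp hDcomp.isBounded
    set R' : ℝ := max R 1 with hR'
    have hR'pos : 0 < R' := lt_of_lt_of_le one_pos (le_max_right _ _)
    set ε : ℝ := (1 - inner ℝ y₀ u) / R' with hε
    have hεpos : 0 < ε := div_pos (by linarith) hR'pos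
    have hball : Metric.ball u ε ⊆ polarSet D := by
      intro u' hu'
      intro y hyD
      have h2 : (inner ℝ y u' : ℝ) = inner ℝ y u + inner ℝ y (u' - u) := by
        rw [inner_sub_right]; ring
      have h3 : (inner ℝ y (u' - u) : ℝ) ≤ ‖y‖ * ‖u' - u‖ := real_inner_le_norm _ _
      have h4 : ‖y‖ ≤ R' := le_trans (hR y hyD) (le_max_left _ _)
      have h5 : ‖u' - u‖ < ε := by
        rw [Metric.mem_ball, dist_eq_norm] at hu'; exact hu'
      have h6 : ‖y‖ * ‖u' - u‖ ≤ R' * ε :=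
        mul_le_mul h4 (le_of_lt h5) (norm_nonneg _) (le_of_lt hR'pos)
      have h7 : R' * ε = 1 - inner ℝ y₀ u := by
        rw [hε]; field_simp
      have h8 : (inner ℝ y u : ℝ) ≤ inner ℝ y₀ u := hy₀max hyD
      linarith
    exact huNI (mem_interior.mpr ⟨Metric.ball u ε, hball, Metric.isOpen_ball,
      Metric.mem_ball_self hεpos⟩)
  -- invariance of D under g3
  have hgK : (fun x : EuclideanSpace ℝ (Fin 3) =>
      (WithLp.toLp 2 (g3.mulVec x) : EuclideanSpace ℝ (Fin 3))) '' K = K := hsym ⟨g3, g3_mem⟩ g3_tetra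
  have hgD : ∀ y ∈ D, (WithLp.toLp 2 (g3.mulVec y) : EuclideanSpace ℝ (Fin 3)) ∈ D := by
    intro y hy
    obtain ⟨k₁, hk₁, k₂, hk₂, hk⟩ := Set.mem_sub.mp hy
    have hgk₁ : (WithLp.toLp 2 (g3.mulVec k₁) : EuclideanSpace ℝ (Fin 3)) ∈ K := by
      rw [← hgK]; exact Set.mem_image_of_mem _ hk₁
    have hgk₂ : (WithLp.toLp 2 (g3.mulVec k₂) : EuclideanSpace ℝ (Fin 3)) ∈ K := by
      rw [← hgK]; exact Set.mem_image_of_mem _ hk₂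
    refine Set.mem_sub.mpr ⟨_, hgk₁, _, hgk₂, ?_⟩
    subst hk
    ext i; simp [Matrix.mulVec_sub]
  set y₁ : EuclideanSpace ℝ (Fin 3) := (WithLp.toLp 2 (g3.mulVec y₀) : EuclideanSpace ℝ (Fin 3)) with hy₁
  set y₂ : EuclideanSpace ℝ (Fin 3) := (WithLp.toLp 2 (g3.mulVec y₁) : EuclideanSpace ℝ (Fin 3)) with hy₂
  have hy₁D : y₁ ∈ D := hgD y₀ hy₀D
  have hy₂D : y₂ ∈ D := hgD y₁ hy₁D
  -- average
  have hw : ((1:ℝ)/2) • y₁ + ((1:ℝ)/2) • y₂ ∈ D :=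
    hDconv hy₁D hy₂D (by norm_num) (by norm_num) (by norm_num)
  have hzD : ((1:ℝ)/3) • y₀ + ((2:ℝ)/3) • (((1:ℝ)/2) • y₁ + ((1:ℝ)/2) • y₂) ∈ D :=
    hDconv hy₀D hw (by norm_num) (by norm_num) (by norm_num)
  -- the average is x
  have hs : a * (y₀ 0 + y₀ 1 + y₀ 2) = 1 := by
    rw [← hinner_u y₀]; exact hmax
  have ha' : a ≠ 0 := ne_of_gt ha
  have hsum : y₀ 0 + y₀ 1 + y₀ 2 = 1 / a := by
    field_simp
    linarith [hs]
  have h3a : (1:ℝ) / (3 * a) = (y₀ 0 + y₀ 1 + y₀ 2) / 3 := by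
    rw [hsum]; field_simp
  have hxz : ((1:ℝ)/3) • y₀ + ((2:ℝ)/3) • (((1:ℝ)/2) • y₁ + ((1:ℝ)/2) • y₂) = x := by
    have e1 : y₁.ofLp = ![y₀ 1, y₀ 2, y₀ 0] := g3_mulVec y₀
    have e2 : y₂.ofLp = ![y₁ 1, y₁ 2, y₁ 0] := g3_mulVec y₁
    ext i
    have hyi1 : ∀ j : Fin 3, y₁ j = (![y₀ 1, y₀ 2, y₀ 0] : Fin 3 → ℝ) j := fun j => congrFun e1 j
    have hyi2 : ∀ j : Fin 3, y₂ j = (![y₁ 1, y₁ 2, y₁ 0] : Fin 3 → ℝ) j := fun j => congrFun e2 j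
    have happ : (((1:ℝ)/3) • y₀ + ((2:ℝ)/3) • (((1:ℝ)/2) • y₁ + ((1:ℝ)/2) • y₂)) i
        = (1/3) * y₀ i + (2/3) * ((1/2) * y₁ i + (1/2) * y₂ i) := rfl
    rw [happ, hxi i, hyi1, hyi2, h3a]
    fin_cases i <;> · simp [hyi1]; ring
  rw [hxz] at hzD
  -- x is not interior
  have hxu : (inner ℝ x u : ℝ) = 1 := by
    rw [hinner_u x, hxi 0, hxi 1, hxi 2]
    field_simp
    ring
  have hxNI : x ∉ interior D := by
    intro hxint
    obtain ⟨ε, hεpos, hball⟩ := Metric.isOpen_iff.mp isOpen_interior x hxint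
    have hxne : x ≠ 0 := by
      intro h0
      have h00 : x 0 = 0 := by rw [h0]; rfl
      rw [hxi 0] at h00
      have h3a0 : (3 : ℝ) * a ≠ 0 := by positivity
      rw [div_eq_zero_iff] at h00
      rcases h00 with h | h
      · exact one_ne_zero h
      · exact h3a0 h
    have hxnorm : 0 < ‖x‖ := norm_pos_iff.mpr hxne
    set c : ℝ := ε / (2 * ‖x‖) with hc
    have hcpos : 0 < c := div_pos hεpos (by positivity)
    have hx' : x + c • x ∈ Metric.ball x ε := by
      rw [Metric.mem_ball, dist_eq_norm]
      have : x + c • x - x = c • x := by abel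
      rw [this, norm_smul]
      simp only [Real.norm_eq_abs, abs_of_pos hcpos]
      have hce : c * ‖x‖ = ε / 2 := by
        rw [hc]; field_simp
      rw [hce]
      linarith
    have hx'D : x + c • x ∈ D := interior_subset (hball hx')
    have hle := huP _ hx'D
    have h2 : (inner ℝ (x + c • x) u : ℝ) = 1 + c := by
      rw [inner_add_left, hxu, real_inner_smul_left, hxu]; ring
    rw [h2] at hle
    linarith
  rw [hDclosed.frontier_eq]
  exact ⟨hzD, hxNI⟩
end
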